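/- arXiv:1511.08054 — 7 statements merged into one kernel-verified Lean document; each statement's English description precedes it below -/
import Mathlib

section
/- For every finite graph G, f_∞(G) ≤ τ(G), where τ(G) is the minimum size of a vertex cover of G. Equivalently: if G has a vertex cover of size k, then for every distance function d on G there is a realization of (G,d) in ℓ_∞^k. -/
/-!
For a vertex `c`, the weighted shortest-walk distance `v ↦ δ(c, v)` is `1`-Lipschitz across
every edge, and the path condition on `d` makes it tight on the star of `c`:
`δ(c, c) = 0` and `δ(c, y) = d c y` for every neighbour `y`. Taking one such coordinate for
each vertex of a cover `C` gives a map into `ℓ_∞^C` in which every edge has length exactly `d`.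
-/

/-- `d` is a distance function on the graph `G`. -/
def IsDistFn {V : Type*} (G : SimpleGraph V) (d : V → V → ℝ) : Prop :=
  (∀ x y, d x y = d y x) ∧ (∀ x y, G.Adj x y → 0 ≤ d x y) ∧
  (∀ x y, G.Adj x y → ∀ p : G.Walk x y,
    d x y ≤ (p.darts.map fun e => d e.toProd.1 e.toProd.2).sum)

theorem pi_norm_eq_of_forall_le_of_eq {ι : Type*} [Fintype ι] {E : ι → Type*}
    [∀ i, SeminormedAddGroup (E i)] {v : ∀ i, E i} {r : ℝ} (hr : 0 ≤ r)
    (hle : ∀ i, ‖v i‖ ≤ r) (heq : ∃ i, ‖v i‖ = r) : ‖v‖ = r := by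
  obtain ⟨i, hi⟩ := heq
  exact le_antisymm ((pi_norm_le_iff_of_nonneg hr).2 hle) (hi ▸ norm_le_pi_norm v i)

namespace SimpleGraph

variable {V : Type*} {G : SimpleGraph V} {d : V → V → ℝ}

noncomputable def Walk.weight (d : V → V → ℝ) {x y : V} (p : G.Walk x y) : ℝ :=
  (p.darts.map fun e => d e.toProd.1 e.toProd.2).sum

namespace Walk

@[simp]
theorem weight_nil (x : V) : (nil : G.Walk x x).weight d = 0 := by
  simp [weight]

@[simp]
theorem weight_cons_nil {x y : V} (h : G.Adj x y) : (cons h nil).weight d = d x y := by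
  simp [weight]

theorem weight_concat {x y z : V} (p : G.Walk x y) (h : G.Adj y z) :
    (p.concat h).weight d = p.weight d + d y z := by
  simp [weight, darts_concat]

theorem weight_nonneg (hnn : ∀ x y, G.Adj x y → 0 ≤ d x y) {x y : V} (p : G.Walk x y) :
    0 ≤ p.weight d :=
  List.sum_nonneg fun _ hr => by
    obtain ⟨e, -, rfl⟩ := List.mem_map.mp hr
    exact hnn _ _ e.adj

end Walk

/-- The weighted distance from `c` to `v`; it is `0` when `v` is not reachable from `c`. -/
noncomputable def weightedDist (G : SimpleGraph V) (d : V → V → ℝ) (c v : V) : ℝ :=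
  ⨅ p : G.Walk c v, p.weight d

section Nonneg

variable (hnn : ∀ x y, G.Adj x y → 0 ≤ d x y)
include hnn

theorem weightedDist_le {c v : V} (p : G.Walk c v) : weightedDist G d c v ≤ p.weight d :=
  ciInf_le ⟨0, Set.forall_mem_range.2 (Walk.weight_nonneg hnn)⟩ p

theorem weightedDist_self (c : V) : weightedDist G d c c = 0 :=
  le_antisymm (by simpa using weightedDist_le hnn (Walk.nil : G.Walk c c))
    (le_ciInf (Walk.weight_nonneg hnn))

theorem weightedDist_le_add_of_adj (c : V) {x y : V} (h : G.Adj y x) :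
    weightedDist G d c x ≤ weightedDist G d c y + d y x := by
  cases isEmpty_or_nonempty (G.Walk c y) with
  | inl hy =>
    have hx : IsEmpty (G.Walk c x) := ⟨fun p => hy.elim (p.concat h.symm)⟩
    simpa [weightedDist, Real.iInf_of_isEmpty] using hnn y x h
  | inr hy =>
    rw [← sub_le_iff_le_add]
    refine le_ciInf fun p => sub_le_iff_le_add.2 ?_
    simpa [Walk.weight_concat] using weightedDist_le hnn (p.concat h)

theorem abs_weightedDist_sub_le (hsymm : ∀ x y, d x y = d y x) (c : V) {x y : V}
    (h : G.Adj x y) : |weightedDist G d c x - weightedDist G d c y| ≤ d x y := by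
  have hxy := weightedDist_le_add_of_adj hnn c h.symm
  have hyx := weightedDist_le_add_of_adj hnn c h
  rw [hsymm y x] at hxy
  exact abs_sub_le_iff.2 ⟨by linarith, by linarith⟩

end Nonneg

theorem weightedDist_of_adj (hd : IsDistFn G d) {x y : V} (h : G.Adj x y) :
    weightedDist G d x y = d x y :=
  have : Nonempty (G.Walk x y) := ⟨Walk.cons h Walk.nil⟩
  le_antisymm (by simpa using weightedDist_le hd.2.1 (Walk.cons h Walk.nil))
    (le_ciInf (hd.2.2 x y h))

/-- The star of `c` is tight for the coordinate `weightedDist G d c`. -/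
theorem abs_weightedDist_sub_of_adj (hd : IsDistFn G d) {c x y : V} (h : G.Adj x y)
    (hc : c = x ∨ c = y) : |weightedDist G d c x - weightedDist G d c y| = d x y := by
  rcases hc with rfl | rfl
  · rw [weightedDist_self hd.2.1, weightedDist_of_adj hd h, zero_sub, abs_neg,
      abs_of_nonneg (hd.2.1 _ _ h)]
  · rw [weightedDist_self hd.2.1, weightedDist_of_adj hd h.symm, sub_zero, hd.1,
      abs_of_nonneg (hd.2.1 _ _ h)]

end SimpleGraph

theorem finfty_le_vertexCover_general
    {V : Type*} (G : SimpleGraph V)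
    (C : Finset V) (hC : ∀ x y, G.Adj x y → x ∈ C ∨ y ∈ C)
    {k : ℕ} (hk : C.card = k)
    (d : V → V → ℝ) (hd : IsDistFn G d) :
    ∃ q : V → Fin k → ℝ, ∀ x y, G.Adj x y → ‖q x - q y‖ = d x y := by
  let e : C ≃ Fin k := Fintype.equivFinOfCardEq (by rw [Fintype.card_coe, hk])
  refine ⟨fun v i => G.weightedDist d (e.symm i) v, fun x y h => ?_⟩
  refine pi_norm_eq_of_forall_le_of_eq (hd.2.1 x y h)
    (fun i => G.abs_weightedDist_sub_le hd.2.1 hd.1 _ h) ?_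
  obtain ⟨c, hcC, hc⟩ : ∃ c ∈ C, c = x ∨ c = y := by
    rcases hC x y h with hx | hy
    exacts [⟨x, hx, .inl rfl⟩, ⟨y, hy, .inr rfl⟩]
  refine ⟨e ⟨c, hcC⟩, ?_⟩
  simpa using G.abs_weightedDist_sub_of_adj hd h hc

/-- `f_∞(G) ≤ τ(G)`: if `G` has a vertex cover `C` of size `k`, then every
distance function on `G` admits a realization in `ℓ_∞^k`. -/
theorem finfty_le_vertexCover
    {V : Type*} [Fintype V] [DecidableEq V] (G : SimpleGraph V)
    (C : Finset V) (hC : ∀ x y, G.Adj x y → x ∈ C ∨ y ∈ C)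
    {k : ℕ} (hk : C.card = k)
    (d : V → V → ℝ) (hd : IsDistFn G d) :
    ∃ q : V → Fin k → ℝ, ∀ x y, G.Adj x y → ‖q x - q y‖ = d x y :=
  finfty_le_vertexCover_general G C hC hk d hd
end

section
/- Let G be a graph and d a distance function on G. Every maximal feasible set F ⊆ E(G) contains a spanning forest of G; that is, if F is feasible and no proper superset of F is feasible, then for every edge xy of G, the vertices x and y lie in the same connected component of (V(G), F). -/
/-- A set `F` of edges of `G` is feasible with respect to `d` if some potential
makes every edge of `F` tight (equivalently, `F` has a feasible orientation). -/
def Feasible {V : Type*} (G : SimpleGraph V) (d : V → V → ℝ)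
    (F : Set (Sym2 V)) : Prop :=
  ∃ p : V → ℝ, (∀ x y, G.Adj x y → |p x - p y| ≤ d x y) ∧
    ∀ x y, G.Adj x y → s(x, y) ∈ F → |p x - p y| = d x y

open SimpleGraph

section Potential

variable {V : Type*} {G : SimpleGraph V} {d : V → V → ℝ}

def IsPotential (G : SimpleGraph V) (d : V → V → ℝ) (p : V → ℝ) : Prop :=
  ∀ x y, G.Adj x y → |p x - p y| ≤ d x y

section Shift

variable {C : Set V} {t : ℝ} {p : V → ℝ}

theorem sub_add_indicator_of_mem_iff {a b : V} (h : a ∈ C ↔ b ∈ C) :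
    (p + C.indicator fun _ => t) a - (p + C.indicator fun _ => t) b = p a - p b := by
  by_cases ha : a ∈ C
  · simp [Set.indicator_of_mem ha, Set.indicator_of_mem (h.1 ha)]
  · simp [Set.indicator_of_notMem ha, Set.indicator_of_notMem (mt h.2 ha)]

theorem sub_add_indicator_of_notMem_of_mem {a b : V} (ha : a ∉ C) (hb : b ∈ C) :
    (p + C.indicator fun _ => t) a - (p + C.indicator fun _ => t) b = p a - p b - t := by
  simp only [Pi.add_apply, Set.indicator_of_notMem ha, add_zero, Set.indicator_of_mem hb]
  ring

theorem IsPotential.add_indicator (hsymm : ∀ x y, d x y = d y x) (hp : IsPotential G d p)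
    (ht₀ : 0 ≤ t) (ht : ∀ a b, G.Adj a b → a ∉ C → b ∈ C → t ≤ p a - p b + d a b) :
    IsPotential G d (p + C.indicator fun _ => t) := by
  have entering : ∀ a b, G.Adj a b → a ∉ C → b ∈ C →
      |(p + C.indicator fun _ => t) a - (p + C.indicator fun _ => t) b| ≤ d a b := by
    intro a b hab ha hb
    rw [sub_add_indicator_of_notMem_of_mem ha hb, abs_le]
    have := abs_le.1 (hp a b hab)
    constructor <;> linarith [ht a b hab ha hb]
  intro a b hab
  by_cases hsame : a ∈ C ↔ b ∈ C
  · rw [sub_add_indicator_of_mem_iff hsame]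
    exact hp a b hab
  · by_cases ha : a ∈ C
    · rw [abs_sub_comm, hsymm]
      exact entering b a hab.symm (fun hb => hsame ⟨fun _ => hb, fun _ => ha⟩) ha
    · exact entering a b hab ha (by tauto)

end Shift

theorem IsPotential.exists_tight_entering_edge [Finite V] (hsymm : ∀ x y, d x y = d y x)
    {p : V → ℝ} (hp : IsPotential G d p) {C : Set V} {x y : V} (hxy : G.Adj x y)
    (hx : x ∉ C) (hy : y ∈ C) :
    ∃ q, IsPotential G d q ∧ (∀ a b, (a ∈ C ↔ b ∈ C) → q a - q b = p a - p b) ∧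
      ∃ u v, G.Adj u v ∧ u ∉ C ∧ v ∈ C ∧ |q u - q v| = d u v := by
  let entering : Set (V × V) := {e | G.Adj e.1 e.2 ∧ e.1 ∉ C ∧ e.2 ∈ C}
  obtain ⟨⟨u, v⟩, ⟨huv, hu, hv⟩, hmin⟩ :=
    entering.exists_min_image (fun e => p e.1 - p e.2 + d e.1 e.2) entering.toFinite
      ⟨(x, y), hxy, hx, hy⟩
  have hslack := abs_le.1 (hp u v huv)
  refine ⟨p + C.indicator fun _ => p u - p v + d u v,
    hp.add_indicator hsymm (by linarith) fun a b hab ha hb => hmin (a, b) ⟨hab, ha, hb⟩,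
    fun a b => sub_add_indicator_of_mem_iff, u, v, huv, hu, hv, ?_⟩
  rw [sub_add_indicator_of_notMem_of_mem hu hv]
  dsimp only
  rw [show p u - p v - (p u - p v + d u v) = -d u v by ring, abs_neg,
    abs_of_nonneg (by linarith)]

theorem SimpleGraph.reachable_fromEdgeSet_of_mem {F : Set (Sym2 V)} {a b : V}
    (h : s(a, b) ∈ F) : (fromEdgeSet F).Reachable a b := by
  by_cases hab : a = b
  · exact hab ▸ Reachable.refl a
  · exact (fromEdgeSet_adj F |>.2 ⟨h, hab⟩).reachable

theorem Feasible.exists_insert_entering_edge [Finite V] (hsymm : ∀ x y, d x y = d y x)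
    {F : Set (Sym2 V)} (hF : Feasible G d F) {C : Set V}
    (hC : ∀ a b, s(a, b) ∈ F → (a ∈ C ↔ b ∈ C)) {x y : V} (hxy : G.Adj x y)
    (hx : x ∉ C) (hy : y ∈ C) :
    ∃ u v, G.Adj u v ∧ u ∉ C ∧ v ∈ C ∧ Feasible G d (insert s(u, v) F) := by
  obtain ⟨p, hp, hpF⟩ := hF
  obtain ⟨q, hq, hqp, u, v, huv, hu, hv, htight⟩ :=
    IsPotential.exists_tight_entering_edge hsymm hp hxy hx hy
  refine ⟨u, v, huv, hu, hv, q, hq, fun a b hab hmem => ?_⟩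
  rcases Set.mem_insert_iff.1 hmem with he | hmemF
  · rcases Sym2.eq_iff.1 he with ⟨rfl, rfl⟩ | ⟨rfl, rfl⟩
    · exact htight
    · rw [abs_sub_comm, htight, hsymm]
  · rw [hqp a b (hC a b hmemF)]
    exact hpF a b hab hmemF

end Potential

/-- Every maximal feasible set contains a spanning forest: the ends of any edge
of `G` lie in the same component of the spanning subgraph with edge set `F`. -/
theorem maximal_feasible_contains_spanning_forest
    {V : Type*} [Fintype V] (G : SimpleGraph V) (d : V → V → ℝ)
    (hd : IsDistFn G d) (F : Set (Sym2 V)) (hFE : F ⊆ G.edgeSet)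
    (hF : Feasible G d F)
    (hmax : ∀ F' : Set (Sym2 V), F ⊆ F' → F' ⊆ G.edgeSet →
      Feasible G d F' → F' = F) :
    ∀ x y, G.Adj x y → (SimpleGraph.fromEdgeSet F).Reachable x y := by
  intro x y hxy
  by_contra hyx
  let C : Set V := {v | (fromEdgeSet F).Reachable y v}
  have hC : ∀ a b, s(a, b) ∈ F → (a ∈ C ↔ b ∈ C) := fun a b h =>
    ⟨fun ha => ha.trans (reachable_fromEdgeSet_of_mem h),
      fun hb => hb.trans (reachable_fromEdgeSet_of_mem h).symm⟩
  obtain ⟨u, v, huv, hu, hv, hfeas⟩ :=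
    hF.exists_insert_entering_edge hd.1 hC hxy (fun hx => hyx hx.symm) (Reachable.refl y)
  have hins : insert s(u, v) F = F :=
    hmax _ (Set.subset_insert _ _) (Set.insert_subset huv hFE) hfeas
  exact hu ((hC u v (hins ▸ Set.mem_insert _ _)).2 hv)
end

section
/- Let G be a graph and d a distance function on G that is generic, meaning for every cycle C of G and every subset S ⊆ E(C) one has Σ_{e∈S} d_e ≠ Σ_{e∈E(C)∖S} d_e. Then every feasible set F ⊆ E(G) with respect to d is acyclic (a forest). -/
namespace List

variable {α β : Type*} [DecidableEq β]

lemma toFinset_map_sdiff_toFinset_map_filter {l : List α} {g : α → β} (hl : (l.map g).Nodup)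
    (q : α → Prop) [DecidablePred q] :
    (l.map g).toFinset \ ((l.filter q).map g).toFinset =
      ((l.filter fun a => ¬q a).map g).toFinset := by
  ext e
  simp only [Finset.mem_sdiff, mem_toFinset, mem_map, mem_filter, decide_eq_true_eq]
  constructor
  · rintro ⟨⟨a, ha, rfl⟩, hnq⟩
    exact ⟨a, ⟨ha, fun hqa => hnq ⟨a, ⟨ha, hqa⟩, rfl⟩⟩, rfl⟩
  · rintro ⟨a, ⟨ha, hnqa⟩, rfl⟩
    refine ⟨⟨a, ha, rfl⟩, ?_⟩
    rintro ⟨b, ⟨hb, hqb⟩, hba⟩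
    exact hnqa (inj_on_of_nodup_map hl hb ha hba ▸ hqb)

lemma exists_sum_eq_sum_sdiff_of_sum_eq_zero {l : List α} {g : α → β}
    (hl : (l.map g).Nodup) (w : β → ℝ) (t : α → ℝ) (ht : ∀ a ∈ l, |t a| = w (g a)) (hsum : (l.map t).sum = 0) :
    ∃ S ⊆ (l.map g).toFinset, ∑ e ∈ S, w e = ∑ e ∈ (l.map g).toFinset \ S, w e := by
  have hsub : ∀ q : α → Bool, (l.filter q).map g <+ l.map g := fun _ => filter_sublist.map g
  refine ⟨((l.filter fun a => 0 ≤ t a).map g).toFinset,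
    fun e he => mem_toFinset.2 ((hsub _).subset (mem_toFinset.1 he)), ?_⟩
  rw [toFinset_map_sdiff_toFinset_map_filter hl, sum_toFinset _ (hl.sublist (hsub _)),
    sum_toFinset _ (hl.sublist (hsub _)), map_map, map_map]
  set up := l.filter fun a => 0 ≤ t a
  set down := l.filter fun a => ¬0 ≤ t a
  have hup : (up.map t).sum = (up.map (w ∘ g)).sum := by
    refine congrArg sum (map_congr_left fun a ha => ?_)
    obtain ⟨hal, hta⟩ := mem_filter.1 ha
    rw [Function.comp_apply, ← ht a hal, abs_of_nonneg (of_decide_eq_true hta)]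
  have hdown : (down.map t).sum = -(down.map (w ∘ g)).sum := by
    rw [sum_neg, map_map]
    refine congrArg sum (map_congr_left fun a ha => ?_)
    obtain ⟨hal, hta⟩ := mem_filter.1 ha
    rw [Function.comp_apply, Function.comp_apply, ← ht a hal,
      abs_of_neg (not_le.1 (of_decide_eq_true hta)), neg_neg]
  linarith [sum_map_filter_add_sum_map_filter_not (fun a => 0 ≤ t a) t l]

end List

namespace SimpleGraph

variable {V : Type*} {G : SimpleGraph V}

lemma Walk.sum_darts_sub {M : Type*} [AddCommGroup M] (f : V → M) {u v : V} (w : G.Walk u v) :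
    (w.darts.map fun x => f x.snd - f x.fst).sum = f v - f u := by
  induction w with
  | nil => simp
  | cons h w ih => simp [ih]

lemma Walk.exists_sum_eq_sum_sdiff_of_tight [DecidableEq V] {v : V} (c : G.Walk v v)
    (hc : c.edges.Nodup) (w : Sym2 V → ℝ) (p : V → ℝ)
    (htight : ∀ x ∈ c.darts, |p x.snd - p x.fst| = w x.edge) :
    ∃ S ⊆ c.edges.toFinset, ∑ e ∈ S, w e = ∑ e ∈ c.edges.toFinset \ S, w e :=
  List.exists_sum_eq_sum_sdiff_of_sum_eq_zero hc w _ htight (by rw [c.sum_darts_sub, sub_self])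

lemma isAcyclic_fromEdgeSet_of_forall_isCycle {F : Set (Sym2 V)} (hF : F ⊆ G.edgeSet)
    (h : ∀ (v : V) (c : G.Walk v v), c.IsCycle → (∀ e ∈ c.edges, e ∈ F) → False) :
    (fromEdgeSet F).IsAcyclic := by
  intro v c hc
  have hle : fromEdgeSet F ≤ G := (fromEdgeSet_le _).2 (Set.sdiff_subset.trans hF)
  refine h v (c.mapLe hle) (hc.mapLe hle) fun e he => ?_
  rw [Walk.edges_mapLe_eq_edges] at he
  exact ((edgeSet_fromEdgeSet F ▸ c.edges_subset_edgeSet he) : e ∈ F \ Sym2.diagSet).1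

end SimpleGraph

theorem generic_feasible_is_forest_general
    {V : Type*} [DecidableEq V] (G : SimpleGraph V)
    (d : V → V → ℝ)
    (hsym : ∀ x y, d x y = d y x)
    (hgen : ∀ (v : V) (c : G.Walk v v), c.IsCycle →
      ∀ S ⊆ c.edges.toFinset,
        ∑ e ∈ S, Sym2.lift ⟨d, hsym⟩ e ≠
        ∑ e ∈ c.edges.toFinset \ S, Sym2.lift ⟨d, hsym⟩ e)
    (F : Set (Sym2 V)) (hFE : F ⊆ G.edgeSet) (hF : Feasible G d F) :
    (SimpleGraph.fromEdgeSet F).IsAcyclic := by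
  obtain ⟨p, -, htight⟩ := hF
  refine SimpleGraph.isAcyclic_fromEdgeSet_of_forall_isCycle hFE fun v c hc hcF => ?_
  obtain ⟨S, hS, hsum⟩ := c.exists_sum_eq_sum_sdiff_of_tight hc.edges_nodup
    (Sym2.lift ⟨d, hsym⟩) p fun x hx => by
      rw [abs_sub_comm]
      exact htight _ _ x.adj (hcF _ (List.mem_map_of_mem hx))
  exact hgen v c hc S hS hsum

/-- If `d` is generic (for every cycle `C` and every subset `S` of its edges the
`d`-sum over `S` differs from the `d`-sum over the complement), then every
feasible set of edges is acyclic. -/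
theorem generic_feasible_is_forest
    {V : Type*} [Fintype V] [DecidableEq V] (G : SimpleGraph V)
    (d : V → V → ℝ) (hd : IsDistFn G d)
    (hsym : ∀ x y, d x y = d y x)
    (hgen : ∀ (v : V) (c : G.Walk v v), c.IsCycle →
      ∀ S ⊆ c.edges.toFinset,
        ∑ e ∈ S, Sym2.lift ⟨d, hsym⟩ e ≠
        ∑ e ∈ c.edges.toFinset \ S, Sym2.lift ⟨d, hsym⟩ e)
    (F : Set (Sym2 V)) (hFE : F ⊆ G.edgeSet) (hF : Feasible G d F) :
    (SimpleGraph.fromEdgeSet F).IsAcyclic :=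
  generic_feasible_is_forest_general G d hsym hgen F hFE hF
end

section
/- For every graph G, f_∞(G) ≥ Υ(G), where Υ(G) is the minimum number of forests needed to partition E(G). Equivalently: if every distance function on G can be realized in ℓ_∞^k, then E(G) can be partitioned into k forests. -/
open SimpleGraph

theorem Finset.sum_odd_mul_two_pow_add_two_pow_ne_zero {ι : Type*} {s : Finset ι}
    (hs : s.Nonempty) {n : ι → ℕ} (hn : Set.InjOn n s) {N : ℕ} (hN : ∀ i ∈ s, n i < N)
    {σ : ι → ℤ} (hσ : ∀ i ∈ s, Odd (σ i)) :
    ∑ i ∈ s, σ i * (2 ^ N + 2 ^ n i) ≠ 0 := by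
  classical
  obtain ⟨i₀, hi₀, hmin⟩ := s.exists_min_image n hs
  have hdvd_N : (2 : ℤ) ^ (n i₀ + 1) ∣ 2 ^ N := pow_dvd_pow 2 (hN i₀ hi₀)
  have hdvd_rest : (2 : ℤ) ^ (n i₀ + 1) ∣ ∑ i ∈ s.erase i₀, σ i * (2 ^ N + 2 ^ n i) := by
    refine Finset.dvd_sum fun i hi => Dvd.dvd.mul_left (dvd_add hdvd_N (pow_dvd_pow 2 ?_)) _
    obtain ⟨hne, his⟩ := Finset.mem_erase.mp hi
    exact lt_of_le_of_ne (hmin i his) fun h => hne (hn his hi₀ h.symm)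
  intro hzero
  rw [← s.add_sum_erase _ hi₀, ← eq_neg_iff_add_eq_zero] at hzero
  have hdvd_i₀ : (2 : ℤ) ^ (n i₀ + 1) ∣ σ i₀ * 2 ^ n i₀ := by
    have := (dvd_neg.mpr hdvd_rest).trans hzero.symm.dvd
    rwa [mul_add, dvd_add_right (hdvd_N.mul_left _)] at this
  rw [pow_succ, mul_comm (σ i₀)] at hdvd_i₀
  exact Int.not_even_iff_odd.mpr (hσ i₀ hi₀)
    (even_iff_two_dvd.mpr ((mul_dvd_mul_iff_left (by positivity)).mp hdvd_i₀))

theorem exists_norm_apply_eq_pi_norm {ι : Type*} [Fintype ι] {E : ι → Type*}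
    [∀ i, SeminormedAddGroup (E i)] {f : ∀ i, E i} (hf : 0 < ‖f‖) : ∃ i, ‖f i‖ = ‖f‖ := by
  have : Nonempty ι := by
    by_contra hι
    rw [not_nonempty_iff] at hι
    simp [Subsingleton.elim f 0] at hf
  obtain ⟨i, -, hi⟩ := Finset.univ.exists_mem_eq_sup Finset.univ_nonempty fun i => ‖f i‖₊
  exact ⟨i, by rw [Pi.norm_def, hi, coe_nnnorm]⟩

namespace SimpleGraph

variable {V : Type*}

theorem Walk.sum_darts_sub_s7 {G : SimpleGraph V} (f : V → ℝ) {x y : V} (p : G.Walk x y) :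
    (p.darts.map fun d => f d.fst - f d.snd).sum = f x - f y := by
  induction p with
  | nil => simp
  | cons _ _ ih => simp only [darts_cons, List.map_cons, List.sum_cons, ih]; ring

theorem isDistFn_of_le_of_lt_two_mul (G : SimpleGraph V) {w : Sym2 V → ℝ} {a : ℝ}
    (hlo : ∀ e, a ≤ w e) (hhi : ∀ e, w e < 2 * a) : IsDistFn G fun x y => w s(x, y) := by
  have hw_nonneg e : 0 ≤ w e := by linarith [hlo e, hhi e]
  refine ⟨fun x y => congrArg w Sym2.eq_swap, fun x y _ => hw_nonneg _, fun x y hxy p => ?_⟩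
  cases p with
  | nil => exact absurd rfl hxy.ne
  | @cons _ t _ _ q =>
    cases q with
    | nil => simp
    | @cons _ u _ _ r =>
      have hr : 0 ≤ (r.darts.map fun d => w s(d.fst, d.snd)).sum :=
        List.sum_nonneg (by simp [hw_nonneg])
      simp only [Walk.darts_cons, List.map_cons, List.sum_cons]
      linarith [hlo s(x, y), hhi s(x, y), hlo s(x, t), hlo s(t, u)]

theorem isAcyclic_of_abs_sub_eq_two_pow_add_two_pow {H : SimpleGraph V} {f : V → ℝ}
    {n : Sym2 V → ℕ} (hn : Function.Injective n) {N : ℕ} (hN : ∀ e, n e < N)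
    (hf : ∀ x y, H.Adj x y → |f x - f y| = 2 ^ N + 2 ^ n s(x, y)) : H.IsAcyclic := by
  classical
  intro v p hp
  let σ : H.Dart → ℤ := fun d => if f d.fst ≤ f d.snd then -1 else 1
  have hterm (d : H.Dart) : f d.fst - f d.snd = ((σ d * (2 ^ N + 2 ^ n d.edge : ℤ) : ℤ) : ℝ) := by
    have hd : |f d.fst - f d.snd| = 2 ^ N + 2 ^ n d.edge := hf _ _ d.adj
    simp only [σ]
    split_ifs with hle
    · rw [abs_of_nonpos (sub_nonpos.mpr hle)] at hd
      push_cast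
      linarith
    · rw [abs_of_pos (sub_pos.mpr (not_le.mp hle))] at hd
      push_cast
      linarith
  have hdarts : p.darts.Nodup := hp.edges_nodup.of_map _
  have hzero : ∑ d ∈ p.darts.toFinset, σ d * (2 ^ N + 2 ^ n d.edge : ℤ) = 0 := by
    rw [List.sum_toFinset _ hdarts]
    have hcast : ((p.darts.map fun d => σ d * (2 ^ N + 2 ^ n d.edge : ℤ)).sum : ℝ) = 0 := by
      rw [Int.cast_list_sum, List.map_map, ← sub_self (f v), ← p.sum_darts_sub_s7 f]
      exact congrArg List.sum (List.map_congr_left fun d _ => (hterm d).symm)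
    exact_mod_cast hcast
  refine Finset.sum_odd_mul_two_pow_add_two_pow_ne_zero ?_ ?_ (fun d _ => hN _) ?_ hzero
  · exact (List.toFinset_nonempty_iff _).mpr (Walk.darts_eq_nil.not.mpr hp.not_nil)
  · exact fun d hd d' hd' h => List.inj_on_of_nodup_map hp.edges_nodup
      (List.mem_toFinset.mp hd) (List.mem_toFinset.mp hd') (hn h)
  · intro d _
    simp only [σ]
    split_ifs <;> decide

end SimpleGraph

theorem finfty_ge_arboricity_general
    {V : Type*} [Fintype V] (G : SimpleGraph V) (k : ℕ)
    (h : ∀ d : V → V → ℝ, IsDistFn G d →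
      ∃ q : V → Fin k → ℝ, ∀ x y, G.Adj x y → ‖q x - q y‖ = d x y) :
    ∃ F : Fin k → Set (Sym2 V),
      (⋃ i, F i) = G.edgeSet ∧
      (Pairwise fun i j => Disjoint (F i) (F j)) ∧
      ∀ i, (SimpleGraph.fromEdgeSet (F i)).IsAcyclic := by
  classical
  let n : Sym2 V → ℕ := fun e => Fintype.equivFin (Sym2 V) e
  have hn : Function.Injective n := Fin.val_injective.comp (Fintype.equivFin _).injective
  let N := Fintype.card (Sym2 V)
  have hnN e : n e < N := (Fintype.equivFin _ e).isLt
  let w : Sym2 V → ℝ := fun e => 2 ^ N + 2 ^ n e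
  have hw_lo e : 2 ^ N ≤ w e := le_add_of_nonneg_right (by positivity)
  have hw_hi e : w e < 2 * 2 ^ N := by
    rw [two_mul]; exact add_lt_add_right (pow_lt_pow_right₀ (one_lt_two (α := ℝ)) (hnN e)) _
  obtain ⟨q, hq⟩ := h _ (G.isDistFn_of_le_of_lt_two_mul hw_lo hw_hi)
  let A : Fin k → Set (Sym2 V) := fun i =>
    {e ∈ G.edgeSet | Sym2.lift ⟨fun x y => |q x i - q y i|, fun x y => abs_sub_comm _ _⟩ e = w e}
  have hA_cover : ⋃ i, A i = G.edgeSet := by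
    refine Set.Subset.antisymm (Set.iUnion_subset fun i => Set.sep_subset _ _) fun e he => ?_
    induction e with
    | _ x y =>
      have hnorm : 0 < ‖q x - q y‖ := by
        rw [hq x y he]; exact (pow_pos two_pos N).trans_le (hw_lo _)
      obtain ⟨i, hi⟩ := exists_norm_apply_eq_pi_norm hnorm
      exact Set.mem_iUnion.mpr ⟨i, he, by simpa [hq x y he] using hi⟩
  have hA_acyclic i : (fromEdgeSet (A i)).IsAcyclic :=
    isAcyclic_of_abs_sub_eq_two_pow_add_two_pow (f := fun v => q v i) hn hnN
      fun x y hxy => ((fromEdgeSet_adj _).mp hxy).1.2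
  refine ⟨disjointed A, iUnion_disjointed.trans hA_cover, disjoint_disjointed A, fun i => ?_⟩
  exact (hA_acyclic i).anti (fromEdgeSet_mono (disjointed_subset A i))

/-- `f_∞(G) ≥ Υ(G)`: if every distance function on `G` can be realized in
`ℓ_∞^k`, then the edge set of `G` can be partitioned into `k` forests. -/
theorem finfty_ge_arboricity
    {V : Type*} [Fintype V] [DecidableEq V] (G : SimpleGraph V) (k : ℕ)
    (h : ∀ d : V → V → ℝ, IsDistFn G d →
      ∃ q : V → Fin k → ℝ, ∀ x y, G.Adj x y → ‖q x - q y‖ = d x y) :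
    ∃ F : Fin k → Set (Sym2 V),
      (⋃ i, F i) = G.edgeSet ∧
      (Pairwise fun i j => Disjoint (F i) (F j)) ∧
      ∀ i, (SimpleGraph.fromEdgeSet (F i)).IsAcyclic :=
  finfty_ge_arboricity_general G k h
end

section
/- Let W_4 be the wheel on 5 vertices (a 4-cycle 1-2-3-4 plus a hub 5 adjacent to all cycle vertices). Define d by d_{12}=18, d_{23}=17, d_{34}=20, d_{41}=24, and d_{i5}=200 for i=1,2,3,4. Then d is a distance function on W_4, and there exist no points q_1,…,q_5 ∈ ℝ² with ‖q_i - q_j‖_∞ = d_{ij} for all edges ij of W_4. -/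
/-- The wheel `W_4` on 5 vertices: the 4-cycle `0-1-2-3` plus the hub `4`. -/
def W4 : SimpleGraph (Fin 5) :=
  SimpleGraph.fromEdgeSet
    {s(0, 1), s(1, 2), s(2, 3), s(3, 0), s(0, 4), s(1, 4), s(2, 4), s(3, 4)}

/-!
Walks are bounded below through the shortest-path metric of the weighted wheel, which agrees
with `d` on every edge.

For non-realizability, put the hub at the origin, so that the rim points lie on the square
`max |x| |y| = 200`. Up to a reflection of the square the first rim point has `x + y ≥ 200`,
and since `x + y` is `2`-Lipschitz for `ℓ_∞` and the rim is short, every rim point has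
`x + y ≥ 0`: the rim lies on the two sides meeting at the corner `(200, 200)`. Along a side the
`ℓ_∞`-distance is the difference of positions, across the corner it is the larger of the two
distances to the corner, and running through the sides on which the four rim points can lie
shows that the cycle `18, 17, 20, 24` cannot close up (on a single side, for instance, it would
need `± 18 ± 17 ± 20 ± 24 = 0`).
-/

theorem SimpleGraph.Walk.le_sum_darts {V : Type*} {G : SimpleGraph V} {d D : V → V → ℝ}
    (hD₀ : ∀ x, D x x = 0) (htri : ∀ x y z, D x z ≤ D x y + D y z)
    (hle : ∀ x y, G.Adj x y → D x y ≤ d x y) {x y : V} (p : G.Walk x y) :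
    D x y ≤ (p.darts.map fun e => d e.toProd.1 e.toProd.2).sum := by
  induction p with
  | nil => simp [hD₀]
  | cons h _ ih =>
    simp only [SimpleGraph.Walk.darts_cons, List.map_cons, List.sum_cons]
    exact (htri _ _ _).trans (add_le_add (hle _ _ h) ih)

theorem isDistFn_of_eq_metric_on_adj {V : Type*} {G : SimpleGraph V} {d D : V → V → ℝ}
    (hsymm : ∀ x y, d x y = d y x) (hD₀ : ∀ x, D x x = 0) (hD : ∀ x y, 0 ≤ D x y)
    (htri : ∀ x y z, D x z ≤ D x y + D y z) (hadj : ∀ x y, G.Adj x y → d x y = D x y) :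
    IsDistFn G d := by
  refine ⟨hsymm, fun x y h => hadj x y h ▸ hD x y, fun x y h p => hadj x y h ▸ ?_⟩
  exact p.le_sum_darts hD₀ htri fun u v huv => (hadj u v huv).ge

theorem W4.adj_iff (i j : Fin 5) : W4.Adj i j ↔
    s(i, j) ∈ ({s(0, 1), s(1, 2), s(2, 3), s(3, 0), s(0, 4), s(1, 4), s(2, 4), s(3, 4)} :
      Finset (Sym2 (Fin 5))) ∧ i ≠ j := by
  simp [W4]

instance : DecidableRel W4.Adj := fun i j => decidable_of_iff _ (W4.adj_iff i j).symm

def W4.shortestPath : Fin 5 → Fin 5 → ℕ :=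
  ![![0, 18, 35, 24, 200], ![18, 0, 17, 37, 200], ![35, 17, 0, 20, 200],
    ![24, 37, 20, 0, 200], ![200, 200, 200, 200, 0]]

theorem W4.shortestPath_self : ∀ i, W4.shortestPath i i = 0 := by decide

theorem W4.shortestPath_triangle :
    ∀ i j k, W4.shortestPath i k ≤ W4.shortestPath i j + W4.shortestPath j k := by
  decide

theorem norm_fin_two (v : Fin 2 → ℝ) : ‖v‖ = max |v 0| |v 1| := by
  simp [Pi.norm_def, Fin.univ_succ]

theorem abs_add_sub_add_le (a b c d : ℝ) : |a + b - (c + d)| ≤ 2 * max |a - c| |b - d| := by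
  calc |a + b - (c + d)| = |(a - c) + (b - d)| := by ring_nf
    _ ≤ |a - c| + |b - d| := abs_add_le _ _
    _ ≤ 2 * max |a - c| |b - d| := by
      linarith [le_max_left |a - c| |b - d|, le_max_right |a - c| |b - d|]

theorem max_eq_of_max_abs_eq {a b R : ℝ} (h : max |a| |b| = R) (hab : 0 ≤ a + b) :
    max a b = R := by
  rcases max_choice |a| |b| with ha | hb <;> grind [abs_le, le_abs_self, max_le_iff]

section RimCycle

variable {x y : Fin 4 → ℝ}

def rimLength : Fin 4 → ℝ := ![18, 17, 20, 24]

def IsRimCycle (x y : Fin 4 → ℝ) : Prop :=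
  ∀ i, max |x i - x (i + 1)| |y i - y (i + 1)| = rimLength i

theorem IsRimCycle.neg_left (h : IsRimCycle x y) : IsRimCycle (-x) y := by
  intro i
  rw [Pi.neg_apply, Pi.neg_apply, neg_sub_neg, abs_sub_comm]
  exact h i

theorem IsRimCycle.neg_right (h : IsRimCycle x y) : IsRimCycle x (-y) := by
  intro i
  rw [Pi.neg_apply, Pi.neg_apply, neg_sub_neg, abs_sub_comm (y _)]
  exact h i

theorem IsRimCycle.false_of_max_eq {c : ℝ} (h : IsRimCycle x y)
    (hc : ∀ i, max (x i) (y i) = c) : False := by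
  have h0 : max |x 0 - x 1| |y 0 - y 1| = 18 := h 0
  have h1 : max |x 1 - x 2| |y 1 - y 2| = 17 := h 1
  have h2 : max |x 2 - x 3| |y 2 - y 3| = 20 := h 2
  have h3 : max |x 3 - x 0| |y 3 - y 0| = 24 := h 3
  have c0 := hc 0; have c1 := hc 1; have c2 := hc 2; have c3 := hc 3
  simp only [max_def, abs_eq_max_neg] at h0 h1 h2 h3 c0 c1 c2 c3
  grind

-- `70 = 2 * (18 + 17)`: from the first rim point, every other one is reached along the rim
-- within `ℓ_∞`-length `35`, and `x + y` drops by at most twice that.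
theorem IsRimCycle.add_lt {R : ℝ} (h : IsRimCycle x y) (hR : ∀ i, max |x i| |y i| = R)
    (hR₇₀ : 70 ≤ R) : x 0 + y 0 < R := by
  by_contra! hR₀
  have hstep (i : Fin 4) : |x i + y i - (x (i + 1) + y (i + 1))| ≤ 2 * rimLength i :=
    h i ▸ abs_add_sub_add_le _ _ _ _
  have h0 := abs_le.mp (hstep 0)
  have h1 := abs_le.mp (hstep 1)
  have h3 := abs_le.mp (hstep 3)
  simp only [rimLength, Fin.reduceAdd, Matrix.cons_val] at h0 h1 h3
  have hs (i : Fin 4) : 0 ≤ x i + y i := by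
    fin_cases i <;> simp only [Fin.reduceFinMk, Fin.isValue] <;> linarith
  exact h.false_of_max_eq fun i => max_eq_of_max_abs_eq (hR i) (hs i)

theorem IsRimCycle.false_of_max_abs_eq {R : ℝ} (h : IsRimCycle x y)
    (hR : ∀ i, max |x i| |y i| = R) (hR₇₀ : 70 ≤ R) : False := by
  have hpp := h.add_lt hR hR₇₀
  have hnn := h.neg_left.neg_right.add_lt (by simpa using hR) hR₇₀
  have hpn := h.neg_right.add_lt (by simpa using hR) hR₇₀
  have hnp := h.neg_left.add_lt (by simpa using hR) hR₇₀
  simp only [Pi.neg_apply] at hnn hpn hnp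
  have : max |x 0| |y 0| < R :=
    max_lt (abs_lt.mpr ⟨by linarith, by linarith⟩) (abs_lt.mpr ⟨by linarith, by linarith⟩)
  exact this.ne (hR 0)

end RimCycle

theorem W4.not_realizable (q : Fin 5 → Fin 2 → ℝ) :
    ¬ ∀ i j, W4.Adj i j → ‖q i - q j‖ = W4.shortestPath i j := by
  intro hq
  have hdist (i j) (hij : W4.Adj i j) :
      max |q i 0 - q j 0| |q i 1 - q j 1| = W4.shortestPath i j := by
    rw [← hq i j hij, norm_fin_two]
    rfl
  have hrim : ∀ i : Fin 4, W4.Adj i.castSucc (i + 1).castSucc := by decide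
  have hspoke : ∀ i : Fin 4, W4.Adj i.castSucc 4 := by decide
  refine IsRimCycle.false_of_max_abs_eq (x := fun i => q i.castSucc 0 - q 4 0)
    (y := fun i => q i.castSucc 1 - q 4 1) (R := 200) (fun i => ?_) (fun i => ?_) (by norm_num)
  · simp only [sub_sub_sub_cancel_right]
    rw [hdist _ _ (hrim i)]
    fin_cases i <;> rfl
  · rw [hdist _ _ (hspoke i)]
    fin_cases i <;> rfl

/-- The distance function on `W_4` with rim values `18, 17, 20, 24` and spoke
values `200` is a distance function which cannot be realized in `ℓ_∞²`. -/
theorem W4_bad_distance_function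
    (d : Fin 5 → Fin 5 → ℝ) (hsym : ∀ i j, d i j = d j i)
    (h01 : d 0 1 = 18) (h12 : d 1 2 = 17) (h23 : d 2 3 = 20) (h30 : d 3 0 = 24)
    (h04 : d 0 4 = 200) (h14 : d 1 4 = 200) (h24 : d 2 4 = 200)
    (h34 : d 3 4 = 200) :
    IsDistFn W4 d ∧
    ¬ ∃ q : Fin 5 → Fin 2 → ℝ, ∀ i j, W4.Adj i j → ‖q i - q j‖ = d i j := by
  have hd : ∀ i j, W4.Adj i j → d i j = W4.shortestPath i j := by
    intro i j hij
    fin_cases i <;> fin_cases j <;>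
    first
    | exact absurd hij (by decide)
    | (simp [W4.shortestPath, h01, h12, h23, h30, h04, h14, h24, h34]; done)
    | (rw [hsym]; simp [W4.shortestPath, h01, h12, h23, h30, h04, h14, h24, h34])
  refine ⟨isDistFn_of_eq_metric_on_adj hsym (fun i => by simp [W4.shortestPath_self])
    (fun _ _ => Nat.cast_nonneg _) (fun i j k => by exact_mod_cast W4.shortestPath_triangle i j k)
    hd, ?_⟩
  rintro ⟨q, hq⟩
  exact W4.not_realizable q fun i j hij => (hq i j hij).trans (hd i j hij)
end

section
/- Let G be a 2-connected graph with distinct vertices u, v such that every vertex of G other than u and v has degree at least 3. Then G has a (K_4 − e) minor in which u and v are mapped to the two endpoints of the missing edge e; equivalently, G + uv has a K_4 minor with u and v in distinct branch sets. -/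
/-!
Induction on the number of vertices, working inside a vertex set `S`. If `v` has only one
neighbour `c` besides `u`, contract `vc`. If `S \ {u, v}` is disconnected, keep one of its
components together with `u`, `v` and the edge `uv`. Otherwise apply Menger's theorem in
`S \ {u, v}` to the neighbourhoods of `u` and `v`: two disjoint connected sets joining them give
the minor directly, while a vertex `c` meeting all such sets cuts off a smaller 2-connected piece
rooted at `c` and `v`. Every reduction adds an edge between the two roots, which the minor never
needs.
-/

/-- `G` is 2-connected: at least 3 vertices, connected, and still connected
after deleting any single vertex. -/
def IsTwoConnected {V : Type*} [Fintype V] (G : SimpleGraph V) : Prop :=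
  3 ≤ Fintype.card V ∧ G.Connected ∧
    ∀ v : V, (G.induce ({v}ᶜ : Set V)).Connected

open Relation Set SimpleGraph

namespace RootedK4MinusEdge

variable {V : Type*} {G H : SimpleGraph V} {S S' T X A B P : Set V} {x y z a b c u v : V}

def ReachIn (G : SimpleGraph V) (S : Set V) (x y : V) : Prop :=
  x ∈ S ∧ y ∈ S ∧ ReflTransGen (fun a b => a ∈ S ∧ b ∈ S ∧ G.Adj a b) x y

namespace ReachIn

theorem refl (hx : x ∈ S) : ReachIn G S x x := ⟨hx, hx, .refl⟩

theorem mem_left (h : ReachIn G S x y) : x ∈ S := h.1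

theorem mem_right (h : ReachIn G S x y) : y ∈ S := h.2.1

theorem trans (h : ReachIn G S x y) (h' : ReachIn G S y z) : ReachIn G S x z :=
  ⟨h.1, h'.2.1, h.2.2.trans h'.2.2⟩

theorem tail (h : ReachIn G S x y) (hz : z ∈ S) (hyz : G.Adj y z) : ReachIn G S x z :=
  ⟨h.1, hz, h.2.2.tail ⟨h.2.1, hz, hyz⟩⟩

theorem symm (h : ReachIn G S x y) : ReachIn G S y x := by
  refine ⟨h.2.1, h.1, ReflTransGen.mono (fun a b hab => ?_) _ _ (ReflTransGen.swap _ _ h.2.2)⟩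
  exact ⟨hab.2.1, hab.1, hab.2.2.symm⟩

theorem mono (hST : S ⊆ T) (h : ReachIn G S x y) : ReachIn G T x y :=
  ⟨hST h.1, hST h.2.1,
    ReflTransGen.mono (fun _ _ hab => ⟨hST hab.1, hST hab.2.1, hab.2.2⟩) _ _ h.2.2⟩

theorem mono_of_adj (hGH : ∀ a ∈ S, ∀ b ∈ S, G.Adj a b → H.Adj a b) (h : ReachIn G S x y) :
    ReachIn H S x y :=
  ⟨h.1, h.2.1,
    ReflTransGen.mono (fun _ _ hab => ⟨hab.1, hab.2.1, hGH _ hab.1 _ hab.2.1 hab.2.2⟩) _ _ h.2.2⟩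

theorem exists_exit (h : ReachIn G S x y) (hx : x ∉ T) (hy : y ∈ T) :
    ∃ t ∈ S ∩ T, ∃ b, ReachIn G (S \ T) x b ∧ G.Adj b t := by
  obtain ⟨hxS, -, hr⟩ := h
  suffices ∀ c, ReflTransGen (fun a b => a ∈ S ∧ b ∈ S ∧ G.Adj a b) x c →
      ReachIn G (S \ T) x c ∨ ∃ t ∈ S ∩ T, ∃ b, ReachIn G (S \ T) x b ∧ G.Adj b t by
    exact (this y hr).resolve_left fun h' => h'.mem_right.2 hy
  intro c hc
  induction hc with
  | refl => exact .inl (refl ⟨hxS, hx⟩)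
  | @tail c d _ hcd ih =>
    rcases ih with hc | hexit
    · by_cases hdT : d ∈ T
      · exact .inr ⟨d, ⟨hcd.2.1, hdT⟩, c, hc, hcd.2.2⟩
      · exact .inl (hc.tail ⟨hcd.2.1, hdT⟩ hcd.2.2)
    · exact .inr hexit

theorem exists_adj (h : ReachIn G S x y) (hxy : x ≠ y) : ∃ z ∈ S, G.Adj x z := by
  obtain ⟨t, ⟨-, rfl⟩, b, hb, hbx⟩ := h.symm.exists_exit (T := {x}) hxy.symm rfl
  exact ⟨b, hb.mem_right.1, hbx.symm⟩

end ReachIn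

theorem reachIn_iff_reachable :
    ReachIn G S x y ↔ ∃ (hx : x ∈ S) (hy : y ∈ S), (G.induce S).Reachable ⟨x, hx⟩ ⟨y, hy⟩ := by
  constructor
  · rintro ⟨hx, hy, hr⟩
    refine ⟨hx, hy, ?_⟩
    induction hr with
    | refl => rfl
    | tail _ hcd ih => exact (ih hcd.1).trans (Adj.reachable (G := G.induce S) hcd.2.2)
  · rintro ⟨hx, hy, hr⟩
    rw [reachable_iff_reflTransGen] at hr
    exact ⟨hx, hy, ReflTransGen.lift Subtype.val (fun a b hab => ⟨a.2, b.2, hab⟩) _ _ hr⟩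

def IsPreconnectedIn (G : SimpleGraph V) (S : Set V) : Prop :=
  ∀ x ∈ S, ∀ y ∈ S, ReachIn G S x y

theorem isPreconnectedIn_iff : IsPreconnectedIn G S ↔ (G.induce S).Preconnected := by
  simp only [IsPreconnectedIn, reachIn_iff_reachable, Preconnected, Subtype.forall]
  exact ⟨fun h x hx y hy => (h x hx y hy).2.2, fun h x hx y hy => ⟨hx, hy, h x hx y hy⟩⟩

namespace IsPreconnectedIn

theorem singleton (x : V) : IsPreconnectedIn G {x} := by
  rintro a rfl b rfl
  exact ReachIn.refl rfl

theorem union (hS : IsPreconnectedIn G S) (hT : IsPreconnectedIn G T) (hST : (S ∩ T).Nonempty) :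
    IsPreconnectedIn G (S ∪ T) := by
  obtain ⟨p, hpS, hpT⟩ := hST
  have toP : ∀ x ∈ S ∪ T, ReachIn G (S ∪ T) x p := by
    rintro x (hx | hx)
    · exact (hS x hx p hpS).mono subset_union_left
    · exact (hT x hx p hpT).mono subset_union_right
  exact fun x hx y hy => (toP x hx).trans (toP y hy).symm

theorem union_of_adj (hS : IsPreconnectedIn G S) (hT : IsPreconnectedIn G T) (ha : a ∈ S)
    (hb : b ∈ T) (hab : G.Adj a b) : IsPreconnectedIn G (S ∪ T) := by
  have toA : ∀ x ∈ S ∪ T, ReachIn G (S ∪ T) x a := by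
    rintro x (hx | hx)
    · exact (hS x hx a ha).mono subset_union_left
    · exact ((hT x hx b hb).mono subset_union_right).tail (.inl ha) hab.symm
  exact fun x hx y hy => (toA x hx).trans (toA y hy).symm

theorem mono_of_adj (hGH : ∀ a ∈ S, ∀ b ∈ S, G.Adj a b → H.Adj a b) (h : IsPreconnectedIn G S) :
    IsPreconnectedIn H S :=
  fun x hx y hy => (h x hx y hy).mono_of_adj hGH

end IsPreconnectedIn

def componentIn (G : SimpleGraph V) (S : Set V) (x : V) : Set V := {y | ReachIn G S x y}

theorem componentIn_subset : componentIn G S x ⊆ S := fun _ h => h.mem_right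

theorem mem_componentIn (hx : x ∈ S) : x ∈ componentIn G S x := ReachIn.refl hx

theorem mem_componentIn_of_adj (hy : y ∈ componentIn G S x) (hz : z ∈ S) (hyz : G.Adj y z) :
    z ∈ componentIn G S x :=
  ReachIn.tail hy hz hyz

theorem isPreconnectedIn_componentIn : IsPreconnectedIn G (componentIn G S x) := by
  have fromX : ∀ y, ReachIn G S x y → ReachIn G (componentIn G S x) x y := by
    rintro y ⟨hx, -, hr⟩
    induction hr with
    | refl => exact ReachIn.refl (mem_componentIn hx)
    | @tail c d hxc hcd ih =>
      exact ih.tail (ReachIn.tail ⟨hx, hcd.1, hxc⟩ hcd.2.1 hcd.2.2) hcd.2.2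
  exact fun a ha b hb => (fromX a ha).symm.trans (fromX b hb)

theorem IsPreconnectedIn.subset_componentIn (hT : IsPreconnectedIn G T) (hTS : T ⊆ S)
    (hx : x ∈ T) : T ⊆ componentIn G S x :=
  fun y hy => (hT x hx y hy).mono hTS

/-- If a walk can leave `S` only through `a` or `b`, then each excursion outside `S` starts and
ends in `{a, b}` and can be replaced by the edge `ab`. -/
theorem ReachIn.sup_edge_inter (h : ReachIn G X y z) (hy : y ∈ S) (hz : z ∈ S)
    (hbd : ∀ w ∈ S, ∀ t ∈ X \ S, G.Adj w t → w = a ∨ w = b) :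
    ReachIn (G ⊔ edge a b) (X ∩ S) y z := by
  obtain ⟨hyX, -, hr⟩ := h
  have hab : ∀ s t, s = a ∨ s = b → t = a ∨ t = b → s ≠ t → (G ⊔ edge a b).Adj s t := by
    intro s t hs ht hst
    refine .inr ((edge_adj ..).2 ⟨?_, hst⟩)
    rcases hs with rfl | rfl <;> rcases ht with rfl | rfl <;> tauto
  suffices ∀ c, ReflTransGen (fun a b => a ∈ X ∧ b ∈ X ∧ G.Adj a b) y c →
      (c ∈ S → ReachIn (G ⊔ edge a b) (X ∩ S) y c) ∧
      (c ∉ S → ∃ s, (s = a ∨ s = b) ∧ ReachIn (G ⊔ edge a b) (X ∩ S) y s) from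
    (this z hr).1 hz
  intro c hc
  induction hc with
  | refl => exact ⟨fun _ => ReachIn.refl ⟨hyX, hy⟩, fun h => absurd hy h⟩
  | @tail c d _ hcd ih =>
    obtain ⟨hcX, hdX, hcd⟩ := hcd
    by_cases hcS : c ∈ S <;> by_cases hdS : d ∈ S
    · exact ⟨fun _ => (ih.1 hcS).tail ⟨hdX, hdS⟩ (.inl hcd), fun h => absurd hdS h⟩
    · exact ⟨fun h => absurd h hdS, fun _ => ⟨c, hbd c hcS d ⟨hdX, hdS⟩ hcd, ih.1 hcS⟩⟩
    · refine ⟨fun _ => ?_, fun h => absurd hdS h⟩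
      obtain ⟨s, hs, hys⟩ := ih.2 hcS
      have hd := hbd d hdS c ⟨hcX, hcS⟩ hcd.symm
      by_cases hsd : s = d
      · exact hsd ▸ hys
      · exact hys.tail ⟨hdX, hdS⟩ (hab s d hs hd hsd)
    · exact ⟨fun h => absurd h hdS, fun _ => ih.2 hcS⟩

/-- The branch sets of a `K₄ - e` minor whose missing edge joins `B 0` and `B 1`. -/
structure IsK4MinusEdgeModel (G : SimpleGraph V) (B : Fin 4 → Set V) : Prop where
  preconnected : ∀ i, IsPreconnectedIn G (B i)
  disjoint : Pairwise fun i j => Disjoint (B i) (B j)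
  adj : ∀ i j : Fin 4, i ≠ j → ¬(i = 0 ∧ j = 1) → ¬(i = 1 ∧ j = 0) →
    ∃ x ∈ B i, ∃ y ∈ B j, G.Adj x y

namespace IsK4MinusEdgeModel

variable {B : Fin 4 → Set V}

theorem eq_of_mem (hB : IsK4MinusEdgeModel G B) {i j : Fin 4} (hi : x ∈ B i) (hj : x ∈ B j) :
    i = j := by
  by_contra hij
  exact Set.disjoint_left.1 (hB.disjoint hij) hi hj

theorem nonempty (hB : IsK4MinusEdgeModel G B) (i : Fin 4) : (B i).Nonempty := by
  obtain ⟨x, hx, -⟩ := hB.adj i (i + 2) (by fin_cases i <;> decide) (by fin_cases i <;> decide)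
    (by fin_cases i <;> decide)
  exact ⟨x, hx⟩

/-- The edge `ab` runs between `B 0` and `B 1`, where no edge is needed. -/
theorem of_sup_edge (hB : IsK4MinusEdgeModel (G ⊔ edge a b) B) (ha : a ∈ B 0) (hb : b ∈ B 1) :
    IsK4MinusEdgeModel G B := by
  have hroots : ∀ i j {x y}, x ∈ B i → y ∈ B j → (edge a b).Adj x y →
      (i = 0 ∧ j = 1) ∨ (i = 1 ∧ j = 0) := by
    intro i j x y hx hy hxy
    rcases ((edge_adj ..).1 hxy).1 with ⟨rfl, rfl⟩ | ⟨rfl, rfl⟩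
    · exact .inl ⟨hB.eq_of_mem hx ha, hB.eq_of_mem hy hb⟩
    · exact .inr ⟨hB.eq_of_mem hx hb, hB.eq_of_mem hy ha⟩
  refine ⟨fun i => (hB.preconnected i).mono_of_adj fun x hx y hy hxy => ?_, hB.disjoint,
    fun i j hij h01 h10 => ?_⟩
  · refine hxy.resolve_right fun hxy => ?_
    rcases hroots i i hx hy hxy with ⟨rfl, h⟩ | ⟨rfl, h⟩ <;> exact absurd h (by decide)
  · obtain ⟨x, hx, y, hy, hxy⟩ := hB.adj i j hij h01 h10
    refine ⟨x, hx, y, hy, hxy.resolve_right fun hxy => ?_⟩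
    rcases hroots i j hx hy hxy with h | h <;> contradiction

theorem extend (hB : IsK4MinusEdgeModel G B) {k : Fin 4} {O : Set V}
    (hO : IsPreconnectedIn G O) (hdisj : ∀ i, Disjoint (B i) O)
    (hadj : ∃ x ∈ B k, ∃ y ∈ O, G.Adj x y) :
    IsK4MinusEdgeModel G (Function.update B k (B k ∪ O)) := by
  have hsub : ∀ i, B i ⊆ Function.update B k (B k ∪ O) i := by
    intro i
    rcases eq_or_ne i k with rfl | hik
    · simp
    · simp [hik]
  refine ⟨fun i => ?_, fun i j hij => ?_, fun i j hij h01 h10 => ?_⟩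
  · rcases eq_or_ne i k with rfl | hik
    · obtain ⟨x, hx, y, hy, hxy⟩ := hadj
      simpa using (hB.preconnected i).union_of_adj hO hx hy hxy
    · simpa [hik] using hB.preconnected i
  · by_cases hik : i = k <;> by_cases hjk : j = k
    · exact absurd (hik.trans hjk.symm) hij
    · subst hik
      simpa [hjk] using (hB.disjoint hij).union_left (hdisj j).symm
    · subst hjk
      simpa [hik] using (hB.disjoint hij).union_right (hdisj i)
    · simpa [hik, hjk] using hB.disjoint hij
  · obtain ⟨x, hx, y, hy, hxy⟩ := hB.adj i j hij h01 h10
    exact ⟨x, hsub i hx, y, hsub j hy, hxy⟩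

theorem induce_connected (hB : IsK4MinusEdgeModel G B) (i : Fin 4) :
    (G.induce (B i)).Connected :=
  (connected_iff _).2 ⟨isPreconnectedIn_iff.1 (hB.preconnected i), (hB.nonempty i).to_subtype⟩

end IsK4MinusEdgeModel

def IsConnector (G : SimpleGraph V) (A B T : Set V) : Prop :=
  IsPreconnectedIn G T ∧ (T ∩ A).Nonempty ∧ (T ∩ B).Nonempty

def Separates (G : SimpleGraph V) (S A B P : Set V) : Prop :=
  ∀ T ⊆ S, IsConnector G A B T → (T ∩ P).Nonempty

def HasTwoConnectors (G : SimpleGraph V) (S A B : Set V) : Prop :=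
  ∃ T₁ ⊆ S, ∃ T₂ ⊆ S, Disjoint T₁ T₂ ∧ IsConnector G A B T₁ ∧ IsConnector G A B T₂

def sideOf (G : SimpleGraph V) (S P A : Set V) : Set V :=
  {z | ∃ a ∈ A, ReachIn G (S \ P) a z} ∪ P

theorem IsConnector.symm (h : IsConnector G A B T) : IsConnector G B A T := ⟨h.1, h.2.2, h.2.1⟩

theorem IsConnector.mono (hGH : G ≤ H) (h : IsConnector G A B T) : IsConnector H A B T :=
  ⟨h.1.mono_of_adj fun _ _ _ _ hxy => hGH hxy, h.2⟩

theorem Separates.symm (h : Separates G S A B P) : Separates G S B A P :=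
  fun T hTS hT => h T hTS hT.symm

theorem HasTwoConnectors.mono (hGH : G ≤ H) (h : HasTwoConnectors G S A B) :
    HasTwoConnectors H S A B := by
  obtain ⟨T₁, h₁S, T₂, h₂S, hd, h₁, h₂⟩ := h
  exact ⟨T₁, h₁S, T₂, h₂S, hd, h₁.mono hGH, h₂.mono hGH⟩

theorem Separates.not_reachIn (hP : Separates G S A B P) (ha : a ∈ A) (hb : b ∈ B) :
    ¬ReachIn G (S \ P) a b := by
  intro hab
  obtain ⟨p, hpT, hpP⟩ := hP (componentIn G (S \ P) a)
    (componentIn_subset.trans sdiff_subset)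
    ⟨isPreconnectedIn_componentIn, ⟨a, mem_componentIn hab.mem_left, ha⟩, ⟨b, hab, hb⟩⟩
  exact (componentIn_subset hpT).2 hpP

theorem sideOf_subset (hPS : P ⊆ S) : sideOf G S P A ⊆ S := by
  rintro z (⟨a, -, haz⟩ | hz)
  exacts [haz.mem_right.1, hPS hz]

theorem subset_sideOf (hA : A ⊆ S) : A ⊆ sideOf G S P A := by
  intro a ha
  by_cases haP : a ∈ P
  exacts [.inr haP, .inl ⟨a, ha, ReachIn.refl ⟨hA ha, haP⟩⟩]

theorem Separates.sideOf_inter_subset (hP : Separates G S A B P) :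
    sideOf G S P A ∩ sideOf G S P B ⊆ P := by
  rintro z ⟨⟨a, ha, haz⟩ | hz, ⟨b, hb, hbz⟩ | hz'⟩
  exacts [absurd (haz.trans hbz.symm) (hP.not_reachIn ha hb), hz', hz, hz]

theorem Separates.sideOf_ssubset (hP : Separates G S A B P) (hPS : P ⊆ S) (hB : B ⊆ S)
    (hBP : ¬B ⊆ P) : sideOf G S P A ⊂ S := by
  obtain ⟨b, hb, hbP⟩ := not_subset.1 hBP
  refine ssubset_of_subset_of_ne (sideOf_subset hPS) fun h => ?_
  have hbS := hB hb
  rw [← h] at hbS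
  rcases hbS with ⟨a, ha, hab⟩ | hbP'
  exacts [hP.not_reachIn ha hb hab, hbP hbP']

/-- Cutting a connector at its first vertex in `P` leaves a connector from `A` to `P` on the
side of `A`. -/
theorem IsConnector.exists_subset_sideOf (hT : IsConnector G A B T) (hTS : T ⊆ S)
    (hTP : (T ∩ P).Nonempty) : ∃ T' ⊆ T, T' ⊆ sideOf G S P A ∧ IsConnector G A P T' := by
  obtain ⟨a, haT, ha⟩ := hT.2.1
  by_cases haP : a ∈ P
  · exact ⟨{a}, singleton_subset_iff.2 haT, singleton_subset_iff.2 (.inr haP),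
      .singleton a, ⟨a, rfl, ha⟩, ⟨a, rfl, haP⟩⟩
  obtain ⟨p, hpT, hpP⟩ := hTP
  obtain ⟨t, ⟨htT, htP⟩, b, hab, hbt⟩ := (hT.1 a haT p hpT).exists_exit haP hpP
  have hK : componentIn G (T \ P) a ⊆ T := componentIn_subset.trans sdiff_subset
  refine ⟨componentIn G (T \ P) a ∪ {t}, union_subset hK (singleton_subset_iff.2 htT), ?_,
    isPreconnectedIn_componentIn.union_of_adj (.singleton t) hab rfl hbt,
    ⟨a, .inl (mem_componentIn ⟨haT, haP⟩), ha⟩, ⟨t, .inr rfl, htP⟩⟩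
  rintro z (hz | rfl)
  · exact .inl ⟨a, ha, hz.mono (sdiff_subset_sdiff_left hTS)⟩
  · exact .inr htP

theorem Separates.of_sideOf (hP : Separates G S A B P)
    (hc : Separates G (sideOf G S P A) A P {c}) : Separates G S A B {c} := by
  intro T hTS hT
  obtain ⟨T', hT'T, hT'side, hT'⟩ := hT.exists_subset_sideOf hTS (hP T hTS hT)
  obtain ⟨c, hcT', rfl⟩ := hc T' hT'side hT'
  exact ⟨c, hT'T hcT', rfl⟩

theorem HasTwoConnectors.exists_pair {q : V} (h : HasTwoConnectors G S A {c, q}) :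
    ∃ Tc ⊆ S, ∃ Tq ⊆ S, Disjoint Tc Tq ∧ IsConnector G A {c} Tc ∧ IsConnector G A {q} Tq := by
  obtain ⟨T₁, h₁S, T₂, h₂S, hd, h₁, h₂⟩ := h
  obtain ⟨p₁, hp₁, hp₁P⟩ := h₁.2.2
  obtain ⟨p₂, hp₂, hp₂P⟩ := h₂.2.2
  have hp : p₁ ≠ p₂ := fun h => Set.disjoint_left.1 hd hp₁ (h ▸ hp₂)
  rcases hp₁P with rfl | rfl <;> rcases hp₂P with rfl | rfl
  · exact absurd rfl hp
  · exact ⟨T₁, h₁S, T₂, h₂S, hd, ⟨h₁.1, h₁.2.1, p₁, hp₁, rfl⟩, ⟨h₂.1, h₂.2.1, p₂, hp₂, rfl⟩⟩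
  · exact ⟨T₂, h₂S, T₁, h₁S, hd.symm, ⟨h₂.1, h₂.2.1, p₂, hp₂, rfl⟩, ⟨h₁.1, h₁.2.1, p₁, hp₁, rfl⟩⟩
  · exact absurd rfl hp

/-- Two disjoint connectors on each side of a separator `{c, q}` are glued at `c` and at `q`. -/
theorem Separates.hasTwoConnectors_of_sides {q : V} (hP : Separates G S A B {c, q})
    (hPS : {c, q} ⊆ S) (hA : HasTwoConnectors G (sideOf G S {c, q} A) A {c, q})
    (hB : HasTwoConnectors G (sideOf G S {c, q} B) B {c, q}) : HasTwoConnectors G S A B := by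
  obtain ⟨Ac, hAcS, Aq, hAqS, hdA, hAc, hAq⟩ := hA.exists_pair
  obtain ⟨Bc, hBcS, Bq, hBqS, hdB, hBc, hBq⟩ := hB.exists_pair
  have hAcBq : ∀ z ∈ Ac, z ∉ Bq := by
    intro z hzA hzB
    have hz : z = c ∨ z = q := hP.sideOf_inter_subset ⟨hAcS hzA, hBqS hzB⟩
    rcases hz with rfl | rfl
    · exact Set.disjoint_left.1 hdB (by simpa using hBc.2.2) hzB
    · exact Set.disjoint_left.1 hdA hzA (by simpa using hAq.2.2)
  have hBcAq : ∀ z ∈ Bc, z ∉ Aq := by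
    intro z hzB hzA
    have hz : z = c ∨ z = q := hP.sideOf_inter_subset ⟨hAqS hzA, hBcS hzB⟩
    rcases hz with rfl | rfl
    · exact Set.disjoint_left.1 hdA (by simpa using hAc.2.2) hzA
    · exact Set.disjoint_left.1 hdB hzB (by simpa using hBq.2.2)
  have glue : ∀ {p T T'}, IsConnector G A {p} T → IsConnector G B {p} T' →
      IsConnector G A B (T ∪ T') := fun {p} {_ _} hT hT' =>
    ⟨hT.1.union hT'.1 ⟨p, by simpa using hT.2.2, by simpa using hT'.2.2⟩,
      hT.2.1.mono (by gcongr; simp), hT'.2.1.mono (by gcongr; simp)⟩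
  refine ⟨Ac ∪ Bc, union_subset (hAcS.trans (sideOf_subset hPS)) (hBcS.trans
    (sideOf_subset hPS)), Aq ∪ Bq, union_subset (hAqS.trans (sideOf_subset hPS))
    (hBqS.trans (sideOf_subset hPS)), ?_, glue hAc hBc, glue hAq hBq⟩
  rw [Set.disjoint_left]
  rintro z (hz | hz) (hz' | hz')
  · exact Set.disjoint_left.1 hdA hz hz'
  · exact hAcBq z hz hz'
  · exact hBcAq z hz hz'
  · exact Set.disjoint_left.1 hdB hz hz'

theorem separates_of_subset_singleton (hA : A ⊆ {a}) : Separates G S A B {a} := by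
  rintro T - ⟨-, ⟨a', haT, ha'⟩, -⟩
  exact ⟨a', haT, hA ha'⟩

theorem separates_of_forall_not_adj (hAB : Disjoint A B) (hS : ∀ x ∈ S, ∀ y ∈ S, ¬G.Adj x y) :
    Separates G S A B P := by
  rintro T hTS ⟨hT, ⟨a, haT, ha⟩, ⟨b, hbT, hb⟩⟩
  obtain ⟨z, hzT, haz⟩ := (hT a haT b hbT).exists_adj (Set.disjoint_left.1 hAB ha |>.imp (· ▸ hb))
  exact absurd haz (hS a (hTS haT) z (hTS hzT))

theorem hasTwoConnectors_or_separates_of_mem_inter (hA : A ⊆ S) (hz : z ∈ A ∩ B) :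
    HasTwoConnectors G S A B ∨ Separates G S A B {z} := by
  by_cases h : Separates G S A B {z}
  · exact .inr h
  simp only [Separates, not_forall, inter_singleton_nonempty] at h
  obtain ⟨T, hTS, hT, hzT⟩ := h
  exact .inl ⟨{z}, singleton_subset_iff.2 (hA hz.1), T, hTS, disjoint_singleton_left.2 hzT,
    ⟨.singleton z, ⟨z, rfl, hz.1⟩, ⟨z, rfl, hz.2⟩⟩, hT⟩

/-- A connector avoiding `c` but not containing both ends of `xy` is a connector of `G - xy`. -/
theorem Separates.of_deleteEdges (h : Separates (G.deleteEdges {s(x, y)}) S A B {c}) :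
    Separates G S A B {c, x} := by
  intro T hTS hT
  by_cases hxT : x ∈ T
  · exact ⟨x, hxT, .inr rfl⟩
  refine (h T hTS ⟨hT.1.mono_of_adj fun p hp q hq hpq => ?_, hT.2⟩).mono (by gcongr; simp)
  refine (deleteEdges_adj ..).2 ⟨hpq, fun hpq' => hxT ?_⟩
  rcases Sym2.eq_iff.1 (mem_singleton_iff.1 hpq') with ⟨rfl, -⟩ | ⟨-, rfl⟩
  exacts [hp, hq]

theorem Separates.of_not_mem {p q : V} (h : Separates G S A B {p, q}) (hp : p ∉ S) :
    Separates G S A B {q} := by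
  intro T hTS hT
  obtain ⟨z, hzT, rfl | rfl⟩ := h T hTS hT
  exacts [absurd (hTS hzT) hp, ⟨z, hzT, rfl⟩]

theorem exists_not_subset_pair (hAB : Disjoint A B) (hA : ∀ a, ¬A ⊆ {a}) (hB : ∀ b, ¬B ⊆ {b})
    (hxy : x ≠ y) (c : V) : ∃ q ∈ ({x, y} : Set V), ¬A ⊆ {c, q} ∧ ¬B ⊆ {c, q} := by
  have mem_of_subset : ∀ {X : Set V} {q}, (∀ a, ¬X ⊆ {a}) → X ⊆ {c, q} → c ∈ X := by
    intro X q hX hXq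
    obtain ⟨z, hz, hzq⟩ := not_subset.1 (hX q)
    rcases hXq hz with rfl | h
    exacts [hz, absurd h hzq]
  have not_subset_both : ∀ {X : Set V}, (∀ a, ¬X ⊆ {a}) → ¬(X ⊆ {c, x} ∧ X ⊆ {c, y}) := by
    rintro X hX ⟨hXx, hXy⟩
    refine hX c fun z hz => ?_
    rcases hXx hz with rfl | rfl
    · rfl
    · rcases hXy hz with rfl | rfl
      exacts [rfl, absurd rfl hxy]
  by_cases hAx : A ⊆ {c, x}
  · refine ⟨y, .inr rfl, fun hAy => not_subset_both hA ⟨hAx, hAy⟩, fun hBy => ?_⟩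
    exact Set.disjoint_left.1 hAB (mem_of_subset hA hAx) (mem_of_subset hB hBy)
  by_cases hBx : B ⊆ {c, x}
  · refine ⟨y, .inr rfl, fun hAy => ?_, fun hBy => not_subset_both hB ⟨hBx, hBy⟩⟩
    exact Set.disjoint_left.1 hAB (mem_of_subset hA hAy) (mem_of_subset hB hBx)
  exact ⟨x, .inl rfl, hAx, hBx⟩

theorem Separates.hasTwoConnectors_or_separates {q : V} (hP : Separates G S A B {c, q})
    (hPS : {c, q} ⊆ S) (hA : A ⊆ S) (hB : B ⊆ S) (hAP : ¬A ⊆ {c, q}) (hBP : ¬B ⊆ {c, q})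
    (ih : ∀ S' ⊂ S, ∀ A' B', A' ⊆ S' → B' ⊆ S' →
      HasTwoConnectors G S' A' B' ∨ ∃ c, Separates G S' A' B' {c}) :
    HasTwoConnectors G S A B ∨ ∃ c, Separates G S A B {c} := by
  rcases ih _ (hP.sideOf_ssubset hPS hB hBP) A {c, q} (subset_sideOf hA) subset_union_right
    with hA₂ | ⟨cA, hcA⟩
  · rcases ih _ (hP.symm.sideOf_ssubset hPS hA hAP) B {c, q} (subset_sideOf hB)
      subset_union_right with hB₂ | ⟨cB, hcB⟩
    · exact .inl (hP.hasTwoConnectors_of_sides hPS hA₂ hB₂)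
    · exact .inr ⟨cB, (hP.symm.of_sideOf hcB).symm⟩
  · exact .inr ⟨cA, hP.of_sideOf hcA⟩

/-- Menger's theorem for `k = 2`, with connected sets in place of paths. -/
theorem hasTwoConnectors_or_separates [Finite V] [Nonempty V] (G : SimpleGraph V)
    (S A B : Set V) (hA : A ⊆ S) (hB : B ⊆ S) :
    HasTwoConnectors G S A B ∨ ∃ c, Separates G S A B {c} := by
  induction hn : S.ncard using Nat.strong_induction_on generalizing G S A B with
  | _ n ihS =>
  induction hm : G.edgeSet.ncard using Nat.strong_induction_on generalizing G with
  | _ m ihE =>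
  by_cases hAB : (A ∩ B).Nonempty
  · exact (hasTwoConnectors_or_separates_of_mem_inter hA hAB.some_mem).imp_right fun h => ⟨_, h⟩
  by_cases hA₁ : ∃ a, A ⊆ {a}
  · exact .inr (hA₁.imp fun a ha => separates_of_subset_singleton ha)
  by_cases hB₁ : ∃ b, B ⊆ {b}
  · exact .inr (hB₁.imp fun b hb => (separates_of_subset_singleton hb).symm)
  push Not at hA₁ hB₁
  rw [not_nonempty_iff_eq_empty, ← disjoint_iff_inter_eq_empty] at hAB
  by_cases hE : ∃ x ∈ S, ∃ y ∈ S, G.Adj x y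
  swap
  · push Not at hE
    exact .inr ⟨Classical.arbitrary V, separates_of_forall_not_adj hAB hE⟩
  obtain ⟨x, hx, y, hy, hxy⟩ := hE
  have hlt : (G.deleteEdges {s(x, y)}).edgeSet.ncard < m := by
    rw [← hm, edgeSet_deleteEdges]
    exact ncard_sdiff_singleton_lt_of_mem hxy
  rcases ihE _ hlt (G.deleteEdges {s(x, y)}) rfl with h₂ | ⟨c, hc⟩
  · exact .inl (h₂.mono (deleteEdges_le _))
  have hsep : ∀ q ∈ ({x, y} : Set V), Separates G S A B {c, q} := by
    rintro q (rfl | rfl)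
    · exact hc.of_deleteEdges
    · rw [Sym2.eq_swap] at hc
      exact hc.of_deleteEdges
  by_cases hcS : c ∈ S
  swap
  · exact .inr ⟨x, (hsep x (.inl rfl)).of_not_mem hcS⟩
  by_cases hcxy : c ∈ ({x, y} : Set V)
  · exact .inr ⟨c, by simpa using hsep c hcxy⟩
  obtain ⟨q, hq, hAq, hBq⟩ := exists_not_subset_pair hAB hA₁ hB₁ hxy.ne c
  have hqS : q ∈ S := by rcases hq with rfl | rfl <;> assumption
  refine (hsep q hq).hasTwoConnectors_or_separates (pair_subset hcS hqS) hA hB hAq hBq ?_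
  intro S' hS' A' B' hA' hB'
  exact ihS _ (hn ▸ ncard_lt_ncard hS') G S' A' B' hA' hB' rfl

structure IsTwoConnectedDegThree (G : SimpleGraph V) (S : Set V) (u v : V) : Prop where
  left_mem : u ∈ S
  right_mem : v ∈ S
  ne : u ≠ v
  three_le_ncard : 3 ≤ S.ncard
  preconnected_diff : ∀ x ∈ S, IsPreconnectedIn G (S \ {x})
  three_le_degree : ∀ w ∈ S, w ≠ u → w ≠ v → 3 ≤ (G.neighborSet w ∩ S).ncard

namespace IsTwoConnectedDegThree

theorem symm (h : IsTwoConnectedDegThree G S u v) : IsTwoConnectedDegThree G S v u :=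
  ⟨h.right_mem, h.left_mem, h.ne.symm, h.three_le_ncard, h.preconnected_diff,
    fun w hw hwv hwu => h.three_le_degree w hw hwu hwv⟩

theorem exists_ne_ne (h : IsTwoConnectedDegThree G S u v) : ∃ w ∈ S, w ≠ u ∧ w ≠ v := by
  have : ({u, v} : Set V).ncard < S.ncard := by
    rw [ncard_pair h.ne]
    exact h.three_le_ncard
  obtain ⟨w, hw, huv⟩ := exists_mem_notMem_of_ncard_lt_ncard this
  exact ⟨w, hw, fun h => huv (.inl h), fun h => huv (.inr h)⟩

theorem four_le_ncard [Finite V] (h : IsTwoConnectedDegThree G S u v) : 4 ≤ S.ncard := by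
  obtain ⟨w, hw, hwu, hwv⟩ := h.exists_ne_ne
  calc 4 ≤ (insert w (G.neighborSet w ∩ S)).ncard := by
        rw [ncard_insert_of_notMem fun h => G.loopless.irrefl w h.1]
        exact Nat.succ_le_succ (h.three_le_degree w hw hwu hwv)
    _ ≤ S.ncard := ncard_le_ncard (insert_subset hw inter_subset_right)

theorem exists_adj_right (h : IsTwoConnectedDegThree G S u v) : ∃ z ∈ S, z ≠ u ∧ G.Adj v z := by
  obtain ⟨w, hw, hwu, hwv⟩ := h.exists_ne_ne
  obtain ⟨z, hz, hvz⟩ := (h.preconnected_diff u h.left_mem v ⟨h.right_mem, h.ne.symm⟩ w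
    ⟨hw, hwu⟩).exists_adj hwv.symm
  exact ⟨z, hz.1, hz.2, hvz⟩

theorem sup_edge (h : IsTwoConnectedDegThree G S u v) (hS' : S' ⊆ S) (ha : a ∈ S')
    (hb : b ∈ S') (hab : a ≠ b) (h3 : 3 ≤ S'.ncard)
    (hbd : ∀ w ∈ S', ∀ t ∈ S \ S', G.Adj w t → w = a ∨ w = b)
    (hroots : ∀ w ∈ S', w ≠ a → w ≠ b → w ≠ u ∧ w ≠ v) :
    IsTwoConnectedDegThree (G ⊔ edge a b) S' a b := by
  refine ⟨ha, hb, hab, h3, fun x hx y hy z hz => ?_, fun w hw hwa hwb => ?_⟩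
  · have hyz := h.preconnected_diff x (hS' hx) y ⟨hS' hy.1, hy.2⟩ z ⟨hS' hz.1, hz.2⟩
    refine (hyz.sup_edge_inter hy.1 hz.1 fun w hw t ht hwt => hbd w hw t ?_ hwt).mono
      fun t ht => ⟨ht.2, ht.1.2⟩
    exact ⟨ht.1.1, ht.2⟩
  · have hN : (G ⊔ edge a b).neighborSet w ∩ S' = G.neighborSet w ∩ S := by
      ext t
      simp only [mem_inter_iff, mem_neighborSet, sup_adj, edge_adj]
      constructor
      · rintro ⟨hwt | ⟨⟨rfl, -⟩ | ⟨rfl, -⟩, -⟩, ht⟩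
        exacts [⟨hwt, hS' ht⟩, absurd rfl hwa, absurd rfl hwb]
      · rintro ⟨hwt, ht⟩
        refine ⟨.inl hwt, by_contra fun ht' => ?_⟩
        rcases hbd w hw t ⟨ht, ht'⟩ hwt with rfl | rfl
        exacts [hwa rfl, hwb rfl]
    obtain ⟨hwu, hwv⟩ := hroots w hw hwa hwb
    rw [hN]
    exact h.three_le_degree w (hS' hw) hwu hwv

end IsTwoConnectedDegThree

theorem isTwoConnectedDegThree_univ [Fintype V] [DecidableRel G.Adj]
    (h : IsTwoConnected G) (huv : u ≠ v) (hdeg : ∀ w : V, w ≠ u → w ≠ v → 3 ≤ G.degree w) :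
    IsTwoConnectedDegThree G univ u v := by
  refine ⟨mem_univ u, mem_univ v, huv, ?_, fun x _ => ?_, fun w _ hwu hwv => ?_⟩
  · rw [ncard_univ, Nat.card_eq_fintype_card]
    exact h.1
  · rw [← compl_eq_univ_sdiff, isPreconnectedIn_iff]
    exact (h.2.2 x).preconnected
  · rw [inter_univ, ← coe_neighborFinset, ncard_coe_finset, card_neighborFinset_eq_degree]
    exact hdeg w hwu hwv

def HasRootedModelIn (G : SimpleGraph V) (S : Set V) (u v : V) : Prop :=
  ∃ B : Fin 4 → Set V, IsK4MinusEdgeModel G B ∧ u ∈ B 0 ∧ v ∈ B 1 ∧ ∀ i, B i ⊆ S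

namespace HasRootedModelIn

variable {O : Set V}

theorem mono (h : HasRootedModelIn G S' a b) (hS : S' ⊆ S) : HasRootedModelIn G S a b := by
  obtain ⟨B, hB, ha, hb, hBS⟩ := h
  exact ⟨B, hB, ha, hb, fun i => (hBS i).trans hS⟩

theorem extend_left (h : HasRootedModelIn G S' a b) (hO : IsPreconnectedIn G O)
    (hS'O : Disjoint S' O) (hu : u ∈ O) (haO : ∃ y ∈ O, G.Adj a y) (hS : S' ∪ O ⊆ S) :
    HasRootedModelIn G S u b := by
  obtain ⟨B, hB, ha, hb, hBS⟩ := h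
  refine ⟨Function.update B 0 (B 0 ∪ O), hB.extend hO (fun i => hS'O.mono_left (hBS i))
    ⟨a, ha, haO⟩, by simp [hu], by simp [hb], fun i => ?_⟩
  rcases eq_or_ne i 0 with rfl | hi
  · simpa using union_subset_union_left O (hBS 0) |>.trans hS
  · simpa [hi] using (hBS i).trans (subset_union_left.trans hS)

theorem extend_right (h : HasRootedModelIn G S' a b) (hO : IsPreconnectedIn G O)
    (hS'O : Disjoint S' O) (hv : v ∈ O) (hbO : ∃ y ∈ O, G.Adj b y) (hS : S' ∪ O ⊆ S) :
    HasRootedModelIn G S a v := by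
  obtain ⟨B, hB, ha, hb, hBS⟩ := h
  refine ⟨Function.update B 1 (B 1 ∪ O), hB.extend hO (fun i => hS'O.mono_left (hBS i))
    ⟨b, hb, hbO⟩, by simp [ha], by simp [hv], fun i => ?_⟩
  rcases eq_or_ne i 1 with rfl | hi
  · simpa using union_subset_union_left O (hBS 1) |>.trans hS
  · simpa [hi] using (hBS i).trans (subset_union_left.trans hS)

end HasRootedModelIn

variable (V) in
def HasRootedModelsBelow (n : ℕ) : Prop :=
  ∀ (G : SimpleGraph V) (S : Set V) (u v : V), S.ncard < n →
    IsTwoConnectedDegThree G S u v → HasRootedModelIn G S u v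

theorem isK4MinusEdgeModel_singleton_singleton {K : Set V} (huv : u ≠ v)
    (hK : IsPreconnectedIn G K) (hT : IsPreconnectedIn G T) (hKT : Disjoint K T)
    (hK' : ∀ z ∈ K, z ≠ u ∧ z ≠ v) (hT' : ∀ z ∈ T, z ≠ u ∧ z ≠ v)
    (huK : ∃ y ∈ K, G.Adj u y) (huT : ∃ y ∈ T, G.Adj u y) (hvK : ∃ y ∈ K, G.Adj v y)
    (hvT : ∃ y ∈ T, G.Adj v y) (hKT' : ∃ x ∈ K, ∃ y ∈ T, G.Adj x y) :
    IsK4MinusEdgeModel G ![{u}, {v}, K, T] := by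
  have hadj : ∀ i j : Fin 4, i < j → ¬(i = 0 ∧ j = 1) →
      ∃ x ∈ ![{u}, {v}, K, T] i, ∃ y ∈ ![{u}, {v}, K, T] j, G.Adj x y := by
    intro i j hij h01
    fin_cases i <;> fin_cases j <;> simp at hij h01 ⊢
    exacts [huK, huT, hvK, hvT, hKT']
  refine ⟨fun i => ?_, fun i j hij => ?_, fun i j hij h01 h10 => ?_⟩
  · fin_cases i
    exacts [.singleton u, .singleton v, hK, hT]
  · have hKu : u ∉ K := fun h => (hK' u h).1 rfl
    have hKv : v ∉ K := fun h => (hK' v h).2 rfl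
    have hTu : u ∉ T := fun h => (hT' u h).1 rfl
    have hTv : v ∉ T := fun h => (hT' v h).2 rfl
    fin_cases i <;> fin_cases j <;> simp_all [hKT.symm, huv.symm]
  · rcases lt_or_gt_of_ne hij with hij | hji
    · exact hadj i j hij h01
    · obtain ⟨x, hx, y, hy, hxy⟩ := hadj j i hji fun h => h10 ⟨h.2, h.1⟩
      exact ⟨y, hy, x, hx, hxy.symm⟩

/-- `K` is the component of `T₁` outside `T₂`; it is adjacent to `T₂` since `S \ {u, v}` is
connected. -/
theorem hasRootedModelIn_of_hasTwoConnectors (hu : u ∈ S) (hv : v ∈ S) (huv : u ≠ v)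
    (hD : IsPreconnectedIn G (S \ {u, v}))
    (h₂ : HasTwoConnectors G (S \ {u, v}) (G.neighborSet u ∩ (S \ {u, v}))
      (G.neighborSet v ∩ (S \ {u, v}))) :
    HasRootedModelIn G S u v := by
  obtain ⟨T₁, h₁D, T₂, h₂D, hd, h₁, h₂⟩ := h₂
  obtain ⟨a, ha₁, hua, -⟩ := h₁.2.1
  obtain ⟨a', ha'₂, hua', -⟩ := h₂.2.1
  obtain ⟨b, hb₁, hvb, -⟩ := h₁.2.2
  obtain ⟨b', hb'₂, hvb', -⟩ := h₂.2.2
  have ha : a ∉ T₂ := Set.disjoint_left.1 hd ha₁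
  set K := componentIn G ((S \ {u, v}) \ T₂) a
  have hK : K ⊆ (S \ {u, v}) \ T₂ := componentIn_subset
  have hT₁K : T₁ ⊆ K := h₁.1.subset_componentIn
    (fun z hz => ⟨h₁D hz, Set.disjoint_left.1 hd hz⟩) ha₁
  obtain ⟨t, ⟨-, ht₂⟩, k, hk, hkt⟩ := (hD a (h₁D ha₁) a' (h₂D ha'₂)).exists_exit ha ha'₂
  have hroots : ∀ z ∈ S \ {u, v}, z ≠ u ∧ z ≠ v := fun z hz => by simpa using hz.2
  refine ⟨_, isK4MinusEdgeModel_singleton_singleton huv isPreconnectedIn_componentIn h₂.1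
    (Set.disjoint_left.2 fun z hz => (hK hz).2) (fun z hz => hroots z (hK hz).1)
    (fun z hz => hroots z (h₂D hz)) ⟨a, hT₁K ha₁, hua⟩ ⟨a', ha'₂, hua'⟩ ⟨b, hT₁K hb₁, hvb⟩
    ⟨b', hb'₂, hvb'⟩ ⟨k, hk, t, ht₂, hkt⟩, rfl, rfl, fun i => ?_⟩
  fin_cases i <;> simp [hu, hv]
  exacts [hK.trans (sdiff_subset.trans sdiff_subset), h₂D.trans sdiff_subset]

theorem hasRootedModelIn_of_separation [Finite V] (ih : HasRootedModelsBelow V S.ncard)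
    (h : IsTwoConnectedDegThree G S u v) (hS' : S' ⊂ S) (ha : a ∈ S') (hb : b ∈ S') (hab : a ≠ b)
    (h3 : 3 ≤ S'.ncard)
    (hbd : ∀ w ∈ S', ∀ t ∈ S \ S', G.Adj w t → w = a ∨ w = b)
    (hroots : ∀ w ∈ S', w ≠ a → w ≠ b → w ≠ u ∧ w ≠ v) : HasRootedModelIn G S' a b := by
  obtain ⟨B, hB, haB, hbB, hBS⟩ :=
    ih _ S' a b (ncard_lt_ncard hS') (h.sup_edge hS'.subset ha hb hab h3 hbd hroots)
  exact ⟨B, hB.of_sup_edge haB hbB, haB, hbB, hBS⟩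

/-- Contract the edge `vc`. -/
theorem hasRootedModelIn_of_neighborSet_subset_pair [Finite V]
    (ih : HasRootedModelsBelow V S.ncard)
    (h : IsTwoConnectedDegThree G S u v) (hvc : G.neighborSet v ∩ S ⊆ {u, c}) :
    HasRootedModelIn G S u v := by
  obtain ⟨z, hz, hzu, hvz⟩ := h.exists_adj_right
  obtain rfl : z = c := (hvc ⟨hvz, hz⟩).resolve_left hzu
  have h3 : 3 ≤ (S \ {v}).ncard := by
    rw [ncard_sdiff_singleton_of_mem h.right_mem]
    have := h.four_le_ncard
    omega
  have hbd : ∀ w ∈ S \ {v}, ∀ t ∈ S \ (S \ {v}), G.Adj w t → w = u ∨ w = z := by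
    intro w hw t ht hwt
    obtain rfl : t = v := by simpa [ht.1] using ht.2
    exact hvc ⟨hwt.symm, hw.1⟩
  refine (hasRootedModelIn_of_separation ih h (sdiff_singleton_ssubset.2 h.right_mem)
    ⟨h.left_mem, h.ne⟩ ⟨hz, hvz.ne'⟩ hzu.symm h3 hbd fun w hw hwu _ => ⟨hwu, hw.2⟩).extend_right
    (.singleton v) disjoint_sdiff_left rfl ⟨v, rfl, hvz.symm⟩ (by simp [h.right_mem])

theorem hasRootedModelIn_of_not_preconnected [Finite V] (ih : HasRootedModelsBelow V S.ncard)
    (h : IsTwoConnectedDegThree G S u v) (hD : ¬IsPreconnectedIn G (S \ {u, v})) :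
    HasRootedModelIn G S u v := by
  simp only [IsPreconnectedIn, not_forall] at hD
  obtain ⟨x, hx, y, hy, hxy⟩ := hD
  set C := componentIn G (S \ {u, v}) x
  have hC : C ⊆ S \ {u, v} := componentIn_subset
  have hS' : C ∪ {u, v} ⊂ S := by
    refine (ssubset_iff_of_subset (union_subset (hC.trans sdiff_subset)
      (pair_subset h.left_mem h.right_mem))).2 ⟨y, hy.1, ?_⟩
    rintro (hyC | hyuv)
    exacts [hxy hyC, hy.2 hyuv]
  have h3 : 3 ≤ (C ∪ {u, v}).ncard := by
    refine (two_lt_ncard_iff (toFinite _)).2 ⟨u, v, x, .inr (.inl rfl), .inr (.inr rfl),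
      .inl (mem_componentIn hx), h.ne, ?_, ?_⟩ <;> rintro rfl <;> simp at hx
  have hbd : ∀ w ∈ C ∪ {u, v}, ∀ t ∈ S \ (C ∪ {u, v}), G.Adj w t → w = u ∨ w = v := by
    rintro w (hw | hw) t ⟨htS, ht⟩ hwt
    · exact absurd (.inl (mem_componentIn_of_adj hw ⟨htS, fun h => ht (.inr h)⟩ hwt)) ht
    · exact hw
  exact (hasRootedModelIn_of_separation ih h hS' (.inr (.inl rfl)) (.inr (.inr rfl)) h.ne h3 hbd
    fun w _ hwu hwv => ⟨hwu, hwv⟩).mono hS'.subset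

/-- An edge `um` would let `m`, joined inside the component to a neighbour of `v`, connect
`N(u)` to `N(v)` while avoiding `c`. -/
theorem Separates.not_adj_of_mem_componentIn {m : V}
    (hc : Separates G (S \ {u, v}) (G.neighborSet u ∩ (S \ {u, v}))
      (G.neighborSet v ∩ (S \ {u, v})) {c})
    (hm : m ∈ componentIn G (S \ {c, u}) v) (hmv : m ≠ v) : ¬G.Adj u m := by
  intro hum
  obtain ⟨t, ⟨-, htv⟩, p, hmp, hpt⟩ := ReachIn.symm hm |>.exists_exit (T := {v}) hmv rfl
  have hpv : G.Adj p v := htv ▸ hpt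
  have hP : componentIn G ((S \ {c, u}) \ {v}) m ⊆ (S \ {u, v}) \ {c} := by
    intro z hz
    have := componentIn_subset hz
    simp only [mem_sdiff, mem_insert_iff, mem_singleton_iff, not_or] at this ⊢
    tauto
  obtain ⟨z, hz, rfl⟩ := hc _ (hP.trans sdiff_subset) ⟨isPreconnectedIn_componentIn,
    ⟨m, mem_componentIn hmp.mem_left, hum, (hP (mem_componentIn hmp.mem_left)).1⟩,
    ⟨p, hmp, hpv.symm, (hP hmp).1⟩⟩
  exact (hP hz).2 rfl

/-- The part of `S \ {v}` outside `S'` that contains `u` reaches `S'` only at `c`, so it can join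
the branch set of `c`. -/
theorem HasRootedModelIn.extend_left_of_boundary (hm : HasRootedModelIn G S' c v)
    (h : IsTwoConnectedDegThree G S u v) (hS' : S' ⊆ S) (hu : u ∉ S') (hc : c ∈ S') (hcv : c ≠ v)
    (hbd : ∀ w ∈ S', ∀ t ∈ S \ S', G.Adj w t → w = c ∨ w = v) : HasRootedModelIn G S u v := by
  obtain ⟨t, ⟨htv, htS'⟩, k, hk, hkt⟩ := (h.preconnected_diff v h.right_mem u
    ⟨h.left_mem, h.ne⟩ c ⟨hS' hc, hcv⟩).exists_exit hu hc
  obtain rfl : t = c := by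
    have hkS := hk.mem_right
    exact (hbd t htS' k ⟨hkS.1.1, hkS.2⟩ hkt.symm).resolve_right htv.2
  have huL : u ∈ componentIn G ((S \ {v}) \ S') u := mem_componentIn ⟨⟨h.left_mem, h.ne⟩, hu⟩
  refine hm.extend_left isPreconnectedIn_componentIn ?_ huL ⟨k, hk, hkt.symm⟩
    (union_subset hS' (componentIn_subset.trans (sdiff_subset.trans sdiff_subset)))
  exact Set.disjoint_right.2 fun z hz => (componentIn_subset hz).2

/-- If a vertex `c` separates the neighbourhoods of `u` and `v` in `S \ {u, v}`, then the
component `M` of `v` in `S \ {c, u}` is attached to the rest of `S` only at `c` and `v`: recurse on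
`M ∪ {c}` with the edge `cv`, rooted at `c` and `v`. -/
theorem hasRootedModelIn_of_separates [Finite V] (ih : HasRootedModelsBelow V S.ncard)
    (h : IsTwoConnectedDegThree G S u v) (hv : ∀ c, ¬G.neighborSet v ∩ S ⊆ {u, c})
    (hD : IsPreconnectedIn G (S \ {u, v}))
    (hc : Separates G (S \ {u, v}) (G.neighborSet u ∩ (S \ {u, v}))
      (G.neighborSet v ∩ (S \ {u, v})) {c}) :
    HasRootedModelIn G S u v := by
  have hmem : ∀ {z}, z ∈ S \ {u, v} ↔ z ∈ S ∧ z ≠ u ∧ z ≠ v := by simp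
  obtain ⟨a, haS, hav, hua⟩ := h.symm.exists_adj_right
  obtain ⟨b, hbS, hbu, hvb⟩ := h.exists_adj_right
  have hcD : c ∈ S \ {u, v} := by
    have hA : a ∈ S \ {u, v} := hmem.2 ⟨haS, hua.ne', hav⟩
    have hB : b ∈ S \ {u, v} := hmem.2 ⟨hbS, hbu, hvb.ne'⟩
    simpa using hc _ subset_rfl ⟨hD, ⟨a, hA, hua, hA⟩, ⟨b, hB, hvb, hB⟩⟩
  obtain ⟨hcS, hcu, hcv⟩ := hmem.1 hcD
  set M := componentIn G (S \ {c, u}) v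
  have hM : M ⊆ S \ {c, u} := componentIn_subset
  have hvM : v ∈ M := mem_componentIn (by simp [h.right_mem, hcv.symm, h.ne.symm])
  obtain ⟨m, hvm, hmS, hmu, hmc⟩ : ∃ m, G.Adj v m ∧ m ∈ S ∧ m ≠ u ∧ m ≠ c := by
    simpa [subset_def, not_forall, and_assoc] using hv c
  have hmM : m ∈ M := mem_componentIn_of_adj hvM (by simp [hmS, hmc, hmu]) hvm
  have huM : u ∉ insert c M := by
    rintro (rfl | huM)
    exacts [hcu rfl, (hM huM).2 (.inr rfl)]
  have hS' : insert c M ⊂ S :=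
    (ssubset_iff_of_subset (insert_subset hcS (hM.trans sdiff_subset))).2 ⟨u, h.left_mem, huM⟩
  have h3 : 3 ≤ (insert c M).ncard :=
    (two_lt_ncard_iff (toFinite _)).2 ⟨c, v, m, .inl rfl, .inr hvM, .inr hmM, hcv, hmc.symm,
      hvm.ne⟩
  have hbd : ∀ w ∈ insert c M, ∀ t ∈ S \ insert c M, G.Adj w t → w = c ∨ w = v := by
    rintro w (rfl | hw) t ⟨htS, ht⟩ hwt
    · exact .inl rfl
    by_contra! hw'
    rcases eq_or_ne t u with rfl | htu
    · exact hc.not_adj_of_mem_componentIn hw hw'.2 hwt.symm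
    · exact ht (.inr (mem_componentIn_of_adj hw (by simp [htS, htu]; rintro rfl; simp at ht) hwt))
  exact (hasRootedModelIn_of_separation ih h hS' (.inl rfl) (.inr hvM) hcv h3 hbd
    fun w hw _ hwv => ⟨fun hwu => huM (hwu ▸ hw), hwv⟩).extend_left_of_boundary h hS'.subset
    huM (.inl rfl) hcv hbd

theorem hasRootedModelIn [Finite V] (h : IsTwoConnectedDegThree G S u v) :
    HasRootedModelIn G S u v := by
  induction hn : S.ncard using Nat.strong_induction_on generalizing G S u v with
  | _ n ih =>
  have ih' : HasRootedModelsBelow V S.ncard := fun H S' a b hlt h' => ih _ (hn ▸ hlt) h' rfl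
  by_cases hv : ∃ c, G.neighborSet v ∩ S ⊆ {u, c}
  · obtain ⟨c, hc⟩ := hv
    exact hasRootedModelIn_of_neighborSet_subset_pair ih' h hc
  push Not at hv
  by_cases hD : IsPreconnectedIn G (S \ {u, v})
  swap
  · exact hasRootedModelIn_of_not_preconnected ih' h hD
  have : Nonempty V := ⟨u⟩
  rcases hasTwoConnectors_or_separates G (S \ {u, v}) (G.neighborSet u ∩ (S \ {u, v}))
    (G.neighborSet v ∩ (S \ {u, v})) inter_subset_right inter_subset_right with h₂ | ⟨c, hc⟩
  · exact hasRootedModelIn_of_hasTwoConnectors h.left_mem h.right_mem h.ne hD h₂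
  · exact hasRootedModelIn_of_separates ih' h hv hD hc

end RootedK4MinusEdge

open RootedK4MinusEdge in
theorem rooted_K4_minus_e_minor_general
    {V : Type*} [Fintype V] (G : SimpleGraph V)
    [DecidableRel G.Adj]
    (h2 : IsTwoConnected G) (u v : V) (huv : u ≠ v)
    (hdeg : ∀ w : V, w ≠ u → w ≠ v → 3 ≤ G.degree w) :
    ∃ B : Fin 4 → Set V,
      (∀ i, (G.induce (B i)).Connected) ∧
      (Pairwise fun i j => Disjoint (B i) (B j)) ∧
      (∀ i j : Fin 4, i ≠ j → ¬(i = 0 ∧ j = 1) → ¬(i = 1 ∧ j = 0) →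
        ∃ x ∈ B i, ∃ y ∈ B j, G.Adj x y) ∧
      u ∈ B 0 ∧ v ∈ B 1 := by
  obtain ⟨B, hB, hu, hv, -⟩ := hasRootedModelIn (isTwoConnectedDegThree_univ h2 huv hdeg)
  exact ⟨B, hB.induce_connected, hB.disjoint, hB.adj, hu, hv⟩

/-- If `G` is 2-connected and every vertex other than `u` and `v` has degree at
least 3, then `G` has a `K_4 - e` minor with `u` and `v` mapped to the two
endpoints of the missing edge `e` (here the pair of branch sets `B 0`, `B 1`,
with edges of `G` required between all other pairs of branch sets). -/
theorem rooted_K4_minus_e_minor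
    {V : Type*} [Fintype V] [DecidableEq V] (G : SimpleGraph V)
    [DecidableRel G.Adj]
    (h2 : IsTwoConnected G) (u v : V) (huv : u ≠ v)
    (hdeg : ∀ w : V, w ≠ u → w ≠ v → 3 ≤ G.degree w) :
    ∃ B : Fin 4 → Set V,
      (∀ i, (G.induce (B i)).Connected) ∧
      (Pairwise fun i j => Disjoint (B i) (B j)) ∧
      (∀ i j : Fin 4, i ≠ j → ¬(i = 0 ∧ j = 1) → ¬(i = 1 ∧ j = 0) →
        ∃ x ∈ B i, ∃ y ∈ B j, G.Adj x y) ∧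
      u ∈ B 0 ∧ v ∈ B 1 :=
  rooted_K4_minus_e_minor_general G h2 u v huv hdeg
end

section
/- Let T be a tree with at least two vertices, with edges enumerated e_1, …, e_m. Let G = T ∘ K_4 be the graph with vertex set {v⁺, v⁻ : v ∈ V(T)} and edges v⁺v⁻ for all v ∈ V(T) together with, for each edge vw ∈ E(T), the four edges v⁺w⁺, v⁻w⁻, v⁺w⁻, v⁻w⁺. Define d by d_{v⁺v⁻} = 1, and for the i-th tree edge vw: d_{v⁺w⁺} = d_{v⁻w⁻} = 2^{−i} and d_{v⁺w⁻} = d_{v⁻w⁺} = 1 − 2^{−i}. Then d is a distance function on G: for every edge e of G and every path P in G between the endpoints of e, the total d-length of P is at least d_e. -/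
/-- The graph `T ∘ K_4` of a tree `T`: vertices `(v, +)` and `(v, -)` for each
vertex `v` of `T` (encoded as `V × Bool`), with `(v,+)(v,-)` an edge for each
`v`, and all four edges between the pairs of `v` and `w` for each tree edge
`vw`. -/
def treeCircK4 {V : Type*} (T : SimpleGraph V) : SimpleGraph (V × Bool) :=
  SimpleGraph.fromRel fun p q => (p.1 = q.1 ∧ p.2 ≠ q.2) ∨ T.Adj p.1 q.1

/-!
Root `T` at a vertex `r` and let `g v` be the weight of the tree path from `r` to `v`. On a tree
edge `ab` of weight `w` one of `g a`, `g b` exceeds the other by `w`, and the larger one is at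
most `1`, because the weights `2^{-i}` of the distinct edges of a path sum to at most `1`. Hence the potential
`F (v, true) = g v`, `F (v, false) = 1 - g v` is `d`-Lipschitz along every edge of `T ∘ K_4`, and it is
tight on every edge at the root, so telescoping `F` along a walk from `x` to `y`, with `r = x.1`,
bounds its length below by `d x y`.
-/

namespace SimpleGraph

variable {V : Type*} {G : SimpleGraph V}

namespace Walk

variable (w : V → V → ℝ)

def weight_s19 {u v : V} (p : G.Walk u v) : ℝ :=
  (p.darts.map fun e => w e.toProd.1 e.toProd.2).sum

@[simp]
lemma weight_nil_s19 {u : V} : (nil : G.Walk u u).weight_s19 w = 0 := rfl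

@[simp]
lemma weight_cons {u v x : V} (h : G.Adj u v) (p : G.Walk v x) :
    (cons h p).weight_s19 w = w u v + p.weight_s19 w := by
  simp [weight_s19]

lemma weight_concat_s19 {u v x : V} (p : G.Walk u v) (h : G.Adj v x) :
    (p.concat h).weight_s19 w = p.weight_s19 w + w v x := by
  simp [weight_s19, darts_concat]

variable {w}

lemma weight_nonneg_s19 (hw : ∀ a b, G.Adj a b → 0 ≤ w a b) {u v : V} (p : G.Walk u v) :
    0 ≤ p.weight_s19 w := by
  induction p with
  | nil => simp
  | cons h _ ih => simpa using add_nonneg (hw _ _ h) ih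

lemma abs_sub_le_weight (f : V → ℝ) (hf : ∀ a b, G.Adj a b → |f a - f b| ≤ w a b)
    {u v : V} (p : G.Walk u v) : |f u - f v| ≤ p.weight_s19 w := by
  induction p with
  | nil => simp
  | @cons a b c h _ ih =>
    calc |f a - f c| ≤ |f a - f b| + |f b - f c| := abs_sub_le _ _ _
      _ ≤ _ := by simpa using add_le_add (hf _ _ h) ih

end Walk

lemma isDistFn_of_exists_potential (d : V → V → ℝ) (hsymm : ∀ x y, d x y = d y x)
    (hnonneg : ∀ x y, G.Adj x y → 0 ≤ d x y)
    (hpot : ∀ x y, G.Adj x y → ∃ f : V → ℝ,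
      (∀ a b, G.Adj a b → |f a - f b| ≤ d a b) ∧ d x y ≤ |f x - f y|) :
    IsDistFn G d := by
  refine ⟨hsymm, hnonneg, fun x y hxy p => ?_⟩
  obtain ⟨f, hf, hxy⟩ := hpot x y hxy
  exact hxy.trans (p.abs_sub_le_weight f hf)

namespace IsTree

variable (hG : G.IsTree)

noncomputable def path (u v : V) : G.Walk u v :=
  (hG.existsUnique_path u v).exists.choose

lemma isPath_path (u v : V) : (hG.path u v).IsPath :=
  (hG.existsUnique_path u v).exists.choose_spec

lemma eq_path {u v : V} {p : G.Walk u v} (hp : p.IsPath) : p = hG.path u v :=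
  (hG.existsUnique_path u v).unique hp (hG.isPath_path u v)

lemma path_self (u : V) : hG.path u u = Walk.nil :=
  (hG.eq_path Walk.IsPath.nil).symm

lemma path_of_adj {u v : V} (h : G.Adj u v) : hG.path u v = Walk.cons h Walk.nil :=
  (hG.eq_path (Path.singleton h).2).symm

lemma path_eq_concat_or (r : V) {a b : V} (h : G.Adj a b) :
    hG.path r b = (hG.path r a).concat h ∨ hG.path r a = (hG.path r b).concat h.symm := by
  have hpa := hG.isPath_path r a
  have hpb := hG.isPath_path r b
  by_cases ha : a ∈ (hG.path r b).support
  · exact .inl (hG.isAcyclic.path_concat hpa hpb h ha)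
  · exact .inr (hG.isAcyclic.path_concat hpb hpa h.symm
      (hG.isAcyclic.mem_support_of_ne_mem_support_of_adj_of_isPath hpa hpb h ha))

noncomputable def rootWeight (w : V → V → ℝ) (r v : V) : ℝ :=
  (hG.path r v).weight_s19 w

variable (w : V → V → ℝ)

lemma rootWeight_self (r : V) : hG.rootWeight w r r = 0 := by
  simp [rootWeight, path_self]

lemma rootWeight_of_adj {r v : V} (h : G.Adj r v) : hG.rootWeight w r v = w r v := by
  simp [rootWeight, path_of_adj _ h]

lemma rootWeight_of_adj_or (hsymm : ∀ a b, w a b = w b a) (r : V) {a b : V} (h : G.Adj a b) :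
    hG.rootWeight w r b = hG.rootWeight w r a + w a b ∨
      hG.rootWeight w r a = hG.rootWeight w r b + w a b := by
  rcases hG.path_eq_concat_or r h with hb | ha
  · exact .inl (by rw [rootWeight, hb, Walk.weight_concat_s19]; rfl)
  · exact .inr (by rw [rootWeight, ha, Walk.weight_concat_s19, hsymm]; rfl)

end IsTree

end SimpleGraph

open SimpleGraph

lemma treeCircK4_adj {V : Type*} {T : SimpleGraph V} {p q : V × Bool} :
    (treeCircK4 T).Adj p q ↔ (p.1 = q.1 ∧ p.2 ≠ q.2) ∨ T.Adj p.1 q.1 := by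
  rw [treeCircK4, fromRel_adj]
  constructor
  · rintro ⟨-, (h | h) | (⟨h1, h2⟩ | h)⟩
    exacts [.inl h, .inr h, .inl ⟨h1.symm, Ne.symm h2⟩, .inr h.symm]
  · rintro (⟨h1, h2⟩ | h)
    · exact ⟨fun h => h2 (congrArg Prod.snd h), .inl (.inl ⟨h1, h2⟩)⟩
    · exact ⟨fun h' => h.ne (congrArg Prod.fst h'), .inl (.inr h)⟩

def orient (b : Bool) (t : ℝ) : ℝ :=
  cond b t (1 - t)

lemma abs_orient_sub_orient_self (b : Bool) (s t : ℝ) :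
    |orient b s - orient b t| = |s - t| := by
  cases b
  · rw [orient, orient, cond_false, cond_false, ← abs_neg]; ring_nf
  · rfl

lemma abs_orient_sub_orient_of_ne {b c : Bool} (h : b ≠ c) (s t : ℝ) :
    |orient b s - orient c t| = |s + t - 1| := by
  cases b <;> cases c <;> simp only [ne_eq, not_true_eq_false] at h
  · rw [orient, orient, cond_false, cond_true, ← abs_neg]; ring_nf
  · rw [orient, orient, cond_true, cond_false]; ring_nf

def treeCircK4Weight {V : Type*} [DecidableEq V] (w : V → V → ℝ) (p q : V × Bool) : ℝ :=
  if p.1 = q.1 then 1 else if p.2 = q.2 then w p.1 q.1 else 1 - w p.1 q.1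

namespace SimpleGraph.IsTree

variable {V : Type*} {T : SimpleGraph V} {w : V → V → ℝ}

section Potential

variable (hT : T.IsTree)

lemma rootWeight_mem_Icc (hnonneg : ∀ a b, T.Adj a b → 0 ≤ w a b)
    (hpath : ∀ u v (p : T.Walk u v), p.IsPath → p.weight_s19 w ≤ 1) (r v : V) :
    hT.rootWeight w r v ∈ Set.Icc 0 1 :=
  ⟨Walk.weight_nonneg_s19 hnonneg _, hpath _ _ _ (hT.isPath_path r v)⟩

variable [DecidableEq V]

lemma abs_orient_rootWeight_sub_le (hsymm : ∀ a b, w a b = w b a)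
    (hnonneg : ∀ a b, T.Adj a b → 0 ≤ w a b)
    (hpath : ∀ u v (p : T.Walk u v), p.IsPath → p.weight_s19 w ≤ 1) (r : V) {a b : V × Bool}
    (hab : (treeCircK4 T).Adj a b) :
    |orient a.2 (hT.rootWeight w r a.1) - orient b.2 (hT.rootWeight w r b.1)|
      ≤ treeCircK4Weight w a b := by
  obtain ⟨ha0, ha1⟩ := hT.rootWeight_mem_Icc hnonneg hpath r a.1
  obtain ⟨hb0, hb1⟩ := hT.rootWeight_mem_Icc hnonneg hpath r b.1
  rcases treeCircK4_adj.1 hab with ⟨h1, h2⟩ | hab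
  · rw [treeCircK4Weight, if_pos h1, abs_orient_sub_orient_of_ne h2, ← h1, abs_le]
    constructor <;> linarith
  · rw [treeCircK4Weight, if_neg hab.ne]
    have hw := hnonneg _ _ hab
    split_ifs with h2
    · rw [h2, abs_orient_sub_orient_self, abs_le]
      rcases hT.rootWeight_of_adj_or w hsymm r hab with h | h <;> constructor <;> linarith
    · rw [abs_orient_sub_orient_of_ne h2, abs_le]
      rcases hT.rootWeight_of_adj_or w hsymm r hab with h | h <;> constructor <;> linarith

lemma le_abs_orient_rootWeight_sub (hnonneg : ∀ a b, T.Adj a b → 0 ≤ w a b) {x y : V × Bool}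
    (hxy : (treeCircK4 T).Adj x y) :
    treeCircK4Weight w x y
      ≤ |orient x.2 (hT.rootWeight w x.1 x.1) - orient y.2 (hT.rootWeight w x.1 y.1)| := by
  rw [hT.rootWeight_self]
  rcases treeCircK4_adj.1 hxy with ⟨h1, h2⟩ | hxy
  · rw [treeCircK4Weight, if_pos h1, ← h1, hT.rootWeight_self,
      abs_orient_sub_orient_of_ne h2]
    norm_num
  · rw [treeCircK4Weight, if_neg hxy.ne, hT.rootWeight_of_adj w hxy]
    split_ifs with h2
    · rw [h2, abs_orient_sub_orient_self, zero_sub, abs_neg, abs_of_nonneg (hnonneg _ _ hxy)]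
    · rw [abs_orient_sub_orient_of_ne h2, zero_add, abs_sub_comm]
      exact le_abs_self _

end Potential

theorem isDistFn_treeCircK4 [DecidableEq V] (hT : T.IsTree) (hsymm : ∀ a b, w a b = w b a)
    (hnonneg : ∀ a b, T.Adj a b → 0 ≤ w a b)
    (hpath : ∀ u v (p : T.Walk u v), p.IsPath → p.weight_s19 w ≤ 1) :
    IsDistFn (treeCircK4 T) (treeCircK4Weight w) := by
  refine isDistFn_of_exists_potential _ (fun x y => ?_) (fun x y hxy => ?_) fun x y hxy =>
    ⟨fun a => orient a.2 (hT.rootWeight w x.1 a.1),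
      fun _ _ => hT.abs_orient_rootWeight_sub_le hsymm hnonneg hpath x.1,
      hT.le_abs_orient_rootWeight_sub hnonneg hxy⟩
  · simp only [treeCircK4Weight, eq_comm (a := x.1), eq_comm (a := x.2), hsymm x.1 y.1]
  · rcases treeCircK4_adj.1 hxy with ⟨h1, -⟩ | hxy
    · simp [treeCircK4Weight, h1]
    · have hw1 : w x.1 y.1 ≤ 1 := by
        simpa using hpath _ _ _ (Path.singleton hxy).2
      have := hnonneg _ _ hxy
      rw [treeCircK4Weight, if_neg hxy.ne]
      split_ifs <;> linarith

end SimpleGraph.IsTree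

lemma sum_two_zpow_neg_le_one (S : Finset ℕ) (hS : ∀ j ∈ S, 1 ≤ j) :
    ∑ j ∈ S, (2 : ℝ) ^ (-(j : ℤ)) ≤ 1 := by
  have hsub : S ⊆ Finset.Ico 1 (S.sup id + 1) := fun j hj =>
    Finset.mem_Ico.2 ⟨hS j hj, Nat.lt_succ_of_le (Finset.le_sup (f := id) hj)⟩
  calc ∑ j ∈ S, (2 : ℝ) ^ (-(j : ℤ)) = ∑ j ∈ S, (2⁻¹ : ℝ) ^ j := by simp [zpow_neg, inv_pow]
    _ ≤ ∑ j ∈ Finset.Ico 1 (S.sup id + 1), (2⁻¹ : ℝ) ^ j :=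
      Finset.sum_le_sum_of_subset_of_nonneg hsub fun _ _ _ => by positivity
    _ ≤ (2⁻¹ : ℝ) ^ 1 / (1 - 2⁻¹) := geom_sum_Ico_le_of_lt_one (by norm_num) (by norm_num)
    _ = 1 := by norm_num

lemma SimpleGraph.Walk.IsPath.weight_two_zpow_neg_le_one {V : Type*} {T : SimpleGraph V}
    (idx : V → V → ℕ) (hidx1 : ∀ v w, T.Adj v w → 1 ≤ idx v w)
    (hidxinj : ∀ v w x y, T.Adj v w → T.Adj x y → idx v w = idx x y → s(v, w) = s(x, y))
    {u v : V} {p : T.Walk u v} (hp : p.IsPath) :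
    p.weight_s19 (fun a b => (2 : ℝ) ^ (-(idx a b : ℤ))) ≤ 1 := by
  classical
  set L := p.darts.map fun e => idx e.toProd.1 e.toProd.2
  have hL : L.Nodup := by
    refine (darts_nodup_of_support_nodup hp.support_nodup).map_on fun e he e' he' h => ?_
    exact List.inj_on_of_nodup_map hp.isTrail.edges_nodup he he' (hidxinj _ _ _ _ e.adj e'.adj h)
  have hweight : p.weight_s19 (fun a b => (2 : ℝ) ^ (-(idx a b : ℤ)))
      = ∑ j ∈ L.toFinset, (2 : ℝ) ^ (-(j : ℤ)) := by
    rw [List.sum_toFinset _ hL, List.map_map]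
    rfl
  rw [hweight]
  refine sum_two_zpow_neg_le_one _ fun j hj => ?_
  obtain ⟨e, -, rfl⟩ := List.mem_map.1 (List.mem_toFinset.1 hj)
  exact hidx1 _ _ e.adj

theorem treeCircK4_distance_function_general
    {V : Type*} [DecidableEq V] (T : SimpleGraph V)
    (hTconn : T.Connected) (hTacyclic : T.IsAcyclic)
    (idx : V → V → ℕ)
    (hidxsym : ∀ v w, idx v w = idx w v)
    (hidx1 : ∀ v w, T.Adj v w → 1 ≤ idx v w)
    (hidxinj : ∀ v w x y, T.Adj v w → T.Adj x y → idx v w = idx x y →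
      s(v, w) = s(x, y)) :
    IsDistFn (treeCircK4 T)
      (fun p q : V × Bool =>
        if p.1 = q.1 then 1
        else if p.2 = q.2 then (2 : ℝ) ^ (-(idx p.1 q.1 : ℤ))
        else 1 - (2 : ℝ) ^ (-(idx p.1 q.1 : ℤ))) :=
  IsTree.isDistFn_treeCircK4 ⟨hTconn, hTacyclic⟩ (fun v w => by rw [hidxsym v w])
    (fun _ _ _ => by positivity) fun _ _ _ hp => hp.weight_two_zpow_neg_le_one idx hidx1 hidxinj

/-- Given an enumeration of the tree edges by indices `idx ≥ 1` (distinct on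
distinct edges), the weights `d_{v⁺v⁻} = 1`, `d_{v⁺w⁺} = d_{v⁻w⁻} = 2^{-i}`,
`d_{v⁺w⁻} = d_{v⁻w⁺} = 1 - 2^{-i}` (where `i = idx v w`) form a distance
function on `T ∘ K_4`: for every edge `e` and every walk `P` between its
endpoints, the total `d`-length of `P` is at least `d_e`. -/
theorem treeCircK4_distance_function
    {V : Type*} [Fintype V] [DecidableEq V] (T : SimpleGraph V)
    (hTconn : T.Connected) (hTacyclic : T.IsAcyclic)
    (hcard : 2 ≤ Fintype.card V)
    (idx : V → V → ℕ)
    (hidxsym : ∀ v w, idx v w = idx w v)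
    (hidx1 : ∀ v w, T.Adj v w → 1 ≤ idx v w)
    (hidxinj : ∀ v w x y, T.Adj v w → T.Adj x y → idx v w = idx x y →
      s(v, w) = s(x, y)) :
    IsDistFn (treeCircK4 T)
      (fun p q : V × Bool =>
        if p.1 = q.1 then 1
        else if p.2 = q.2 then (2 : ℝ) ^ (-(idx p.1 q.1 : ℤ))
        else 1 - (2 : ℝ) ^ (-(idx p.1 q.1 : ℤ))) :=
  treeCircK4_distance_function_general T hTconn hTacyclic idx hidxsym hidx1 hidxinj
end
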